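/- arXiv:2205.14337 — 4 statements merged into one kernel-verified Lean document; each statement's English description precedes it below -/
import Mathlib

section
/- For every y ∈ ℝ and every u with 0 ≤ u < 1, the series ∑_{a=0}^{∞} He_a(y)²·u^a / a! converges and equals (1 − u²)^{−1/2} · exp(u·y² / (1 + u)). -/
open scoped BigOperators

/-- Probabilists' Hermite polynomials: `He 0 = 1`, `He 1 = id`,
`He (a+1) x = x * He a x - a * He (a-1) x`. -/
noncomputable def He : ℕ → ℝ → ℝ
  | 0, _ => 1
  | 1, x => x
  | (n + 2), x => x * He (n + 1) x - ((n : ℝ) + 1) * He n x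

/-!
The key is the integral representation `He n y = (2π)^(-1/2) ∫ (y + iz)ⁿ e^(-z²/2) dz`: its
right-hand side satisfies the Hermite recursion by Gaussian integration by parts. Squaring it turns
the series into `(2π)⁻¹ Σ uⁿ/n! ∬ ((y + ia)(y + ib))ⁿ e^(-(a² + b²)/2) da db`. For `u < 1` the
terms are dominated by `exp (u (|y| + |a|)(|y| + |b|) - (a² + b²)/2)`, which is integrable, so sum
and integral commute and leave `(2π)⁻¹ ∬ exp (u (y + ia)(y + ib) - (a² + b²)/2)`, which is two
successive complex Gaussian integrals.
-/

open MeasureTheory Complex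
open scoped Real

noncomputable section

lemma He_succ (n : ℕ) (x : ℝ) : He (n + 1) x = x * He n x - n * He (n - 1) x := by
  cases n with
  | zero => simp [He]
  | succ n => simp [He]

lemma integrable_exp_neg_mul_sq_add_mul_abs {b : ℝ} (hb : 0 < b) (c : ℝ) :
    Integrable fun z : ℝ => Real.exp (-b * z ^ 2 + c * |z|) := by
  refine ((integrable_exp_neg_mul_sq (half_pos hb)).const_mul (Real.exp (c ^ 2 / (2 * b)))).mono'
    (by fun_prop) (.of_forall fun z => ?_)
  have hsq : c * |z| ≤ b / 2 * z ^ 2 + c ^ 2 / (2 * b) := by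
    rw [← sq_abs z]
    field_simp
    nlinarith [sq_nonneg (b * |z| - c)]
  rw [Real.norm_of_nonneg (Real.exp_pos _).le, ← Real.exp_add, Real.exp_le_exp]
  linarith

lemma integral_cexp_quadratic_of_neg {b : ℝ} (hb : b < 0) (c d : ℂ) :
    ∫ x : ℝ, cexp (b * x ^ 2 + c * x + d) = √(π / -b) * cexp (d - c ^ 2 / (4 * b)) := by
  rw [integral_cexp_quadratic (by simpa using hb), Real.sqrt_eq_rpow,
    ofReal_cpow (div_nonneg Real.pi_pos.le (neg_nonneg.mpr hb.le))]
  push_cast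
  ring_nf

lemma norm_add_mul_I_le (y z : ℝ) : ‖(y + z * I : ℂ)‖ ≤ |y| + |z| :=
  (norm_add_le _ _).trans (by simp)

def gaussWeight (z : ℝ) : ℂ := cexp (-(z : ℂ) ^ 2 / 2)

lemma norm_gaussWeight (z : ℝ) : ‖gaussWeight z‖ = Real.exp (-z ^ 2 / 2) := by
  simp [gaussWeight, Complex.norm_exp, ← Complex.ofReal_pow]

@[fun_prop]
lemma continuous_gaussWeight : Continuous gaussWeight := by
  unfold gaussWeight; fun_prop

lemma integrable_pow_mul_gaussWeight (y : ℝ) (n : ℕ) :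
    Integrable fun z : ℝ => (y + z * I : ℂ) ^ n * gaussWeight z := by
  refine ((integrable_exp_neg_mul_sq_add_mul_abs one_half_pos 1).const_mul
    (n.factorial * Real.exp |y|)).mono' (by fun_prop) (.of_forall fun z => ?_)
  have hpow : (|y| + |z|) ^ n ≤ n.factorial * Real.exp (|y| + |z|) := by
    have := Real.pow_div_factorial_le_exp (|y| + |z|) (by positivity) n
    rwa [div_le_iff₀ (by positivity), mul_comm] at this
  calc ‖(y + z * I : ℂ) ^ n * gaussWeight z‖
      ≤ (|y| + |z|) ^ n * Real.exp (-z ^ 2 / 2) := by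
        rw [norm_mul, norm_pow, norm_gaussWeight]
        gcongr
        exact norm_add_mul_I_le y z
    _ ≤ n.factorial * Real.exp (|y| + |z|) * Real.exp (-z ^ 2 / 2) := by gcongr
    _ = n.factorial * Real.exp |y| * Real.exp (-(1 / 2) * z ^ 2 + 1 * |z|) := by
        rw [mul_assoc, mul_assoc, ← Real.exp_add, ← Real.exp_add]; ring_nf

lemma hasDerivAt_pow_mul_gaussWeight (y : ℝ) (n : ℕ) (z : ℝ) :
    HasDerivAt (fun z : ℝ => (y + z * I : ℂ) ^ n * gaussWeight z)
      (I * (n * ((y + z * I : ℂ) ^ (n - 1) * gaussWeight z) - y * ((y + z * I) ^ n * gaussWeight z)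
        + (y + z * I) ^ (n + 1) * gaussWeight z)) z := by
  have hA : HasDerivAt (fun z : ℝ => (y + z * I : ℂ)) I z := by
    simpa using ((hasDerivAt_id (z : ℂ)).comp_ofReal.mul_const I).const_add (y : ℂ)
  have hg : HasDerivAt gaussWeight (-z * gaussWeight z) z := by
    have h2 : HasDerivAt (fun w : ℂ => -w ^ 2 / 2) (-(z : ℂ)) z :=
      ((hasDerivAt_pow 2 (z : ℂ)).neg.div_const 2).congr_deriv (by ring)
    exact h2.cexp.comp_ofReal.congr_deriv (by rw [gaussWeight]; ring)
  refine ((hA.pow n).mul hg).congr_deriv ?_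
  simp only [Pi.pow_apply]
  rw [pow_succ]
  -- `-z = I * ((y + z I) - y)`
  linear_combination (-(y + z * I : ℂ) ^ n * gaussWeight z * z) * I_sq

def hermiteMoment (y : ℝ) (n : ℕ) : ℂ := ∫ z : ℝ, (y + z * I : ℂ) ^ n * gaussWeight z

lemma hermiteMoment_succ (y : ℝ) (n : ℕ) :
    hermiteMoment y (n + 1) = y * hermiteMoment y n - n * hermiteMoment y (n - 1) := by
  have hint := integrable_pow_mul_gaussWeight y
  have hlow : Integrable fun z : ℝ =>
      n * ((y + z * I : ℂ) ^ (n - 1) * gaussWeight z) - y * ((y + z * I) ^ n * gaussWeight z) :=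
    ((hint _).const_mul _).sub ((hint _).const_mul _)
  have h := integral_eq_zero_of_hasDerivAt_of_integrable (hasDerivAt_pow_mul_gaussWeight y n)
    ((hlow.add (hint (n + 1))).const_mul I) (hint n)
  rw [integral_const_mul, integral_add hlow (hint _), integral_sub ((hint _).const_mul _)
    ((hint _).const_mul _), integral_const_mul, integral_const_mul] at h
  unfold hermiteMoment
  linear_combination (mul_eq_zero.mp h).resolve_left I_ne_zero

lemma hermiteMoment_zero (y : ℝ) : hermiteMoment y 0 = √(2 * π) := by
  have h := integral_cexp_quadratic_of_neg (b := -1 / 2) (by norm_num) 0 0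
  simp only [zero_mul, add_zero, zero_pow two_ne_zero, zero_div, sub_zero, exp_zero,
    mul_one] at h
  rw [hermiteMoment, show 2 * π = π / -(-1 / 2) by ring, ← h]
  simp only [pow_zero, one_mul, gaussWeight]
  push_cast
  ring_nf

lemma hermiteMoment_eq_He (y : ℝ) (n : ℕ) : hermiteMoment y n = He n y * √(2 * π) := by
  induction n using Nat.strong_induction_on with
  | _ n ih =>
    cases n with
    | zero => simpa [He] using hermiteMoment_zero y
    | succ n =>
      rw [hermiteMoment_succ, ih n (by omega), ih (n - 1) (by omega), He_succ]
      push_cast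
      ring

lemma hasSum_integral_pow_div_factorial_mul {α : Type*} [MeasurableSpace α] {μ : Measure α}
    {w K : α → ℂ} (hw : AEStronglyMeasurable w μ) (hK : AEStronglyMeasurable K μ)
    (hint : Integrable (fun p => Real.exp ‖w p‖ * ‖K p‖) μ) :
    HasSum (fun n : ℕ => ∫ p, w p ^ n / n.factorial * K p ∂μ) (∫ p, cexp (w p) * K p ∂μ) := by
  refine hasSum_integral_of_dominated_convergence (fun n p => ‖w p‖ ^ n / n.factorial * ‖K p‖)
    (fun n => by fun_prop) (fun n => .of_forall fun p => by simp)
    (.of_forall fun p => (Real.summable_pow_div_factorial _).mul_right _) ?_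
    (.of_forall fun p => by
      simpa [← Complex.exp_eq_exp_ℂ] using
        (NormedSpace.expSeries_div_hasSum_exp (w p)).mul_right (K p))
  have hexp (x : ℝ) : ∑' n : ℕ, x ^ n / n.factorial = Real.exp x := by
    rw [Real.exp_eq_exp_ℝ, (NormedSpace.expSeries_div_hasSum_exp x).tsum_eq]
  simpa only [tsum_mul_right, hexp] using hint

def mehlerExponent (u y : ℝ) (p : ℝ × ℝ) : ℂ := u * (y + p.1 * I) * (y + p.2 * I)

@[fun_prop]
lemma continuous_mehlerExponent (u y : ℝ) : Continuous (mehlerExponent u y) := by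
  unfold mehlerExponent; fun_prop

lemma integrable_exp_norm_mehlerExponent {u : ℝ} (y : ℝ) (hu0 : 0 ≤ u) (hu1 : u < 1) :
    Integrable fun p : ℝ × ℝ =>
      Real.exp ‖mehlerExponent u y p‖ * ‖gaussWeight p.1 * gaussWeight p.2‖ := by
  -- `2st ≤ s² + t²` splits the bound into a product of one-variable Gaussians, integrable as
  -- `u < 1`
  set H : ℝ → ℝ := fun t => Real.exp (u * (|y| + |t|) ^ 2 / 2) * Real.exp (-t ^ 2 / 2)
  have hH : Integrable H := by
    have hform (t : ℝ) : H t =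
        Real.exp (u * y ^ 2 / 2) * Real.exp (-((1 - u) / 2) * t ^ 2 + u * |y| * |t|) := by
      simp only [H, ← Real.exp_add]
      congr 1
      rw [← sq_abs t, ← sq_abs y]
      ring
    rw [funext hform]
    exact (integrable_exp_neg_mul_sq_add_mul_abs (by linarith) _).const_mul _
  refine (hH.mul_prod hH).mono' (by fun_prop) (.of_forall fun p => ?_)
  have hnorm : ‖mehlerExponent u y p‖ ≤ u * ((|y| + |p.1|) * (|y| + |p.2|)) := by
    rw [mehlerExponent, norm_mul, norm_mul, norm_real, Real.norm_of_nonneg hu0, mul_assoc]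
    gcongr <;> exact norm_add_mul_I_le _ _
  rw [Real.norm_of_nonneg (by positivity), norm_mul, norm_gaussWeight, norm_gaussWeight]
  calc Real.exp ‖mehlerExponent u y p‖ * (Real.exp (-p.1 ^ 2 / 2) * Real.exp (-p.2 ^ 2 / 2))
      ≤ Real.exp (u * ((|y| + |p.1|) * (|y| + |p.2|)))
          * (Real.exp (-p.1 ^ 2 / 2) * Real.exp (-p.2 ^ 2 / 2)) := by gcongr
    _ ≤ Real.exp (u * (|y| + |p.1|) ^ 2 / 2) * Real.exp (u * (|y| + |p.2|) ^ 2 / 2)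
          * (Real.exp (-p.1 ^ 2 / 2) * Real.exp (-p.2 ^ 2 / 2)) := by
        gcongr ?_ * _
        rw [← Real.exp_add, Real.exp_le_exp]
        nlinarith [mul_nonneg hu0 (sq_nonneg (|p.1| - |p.2|))]
    _ = H p.1 * H p.2 := by ring

lemma integral_mehlerExponent_pow_mul (u y : ℝ) (n : ℕ) :
    ∫ p : ℝ × ℝ, mehlerExponent u y p ^ n / n.factorial * (gaussWeight p.1 * gaussWeight p.2) =
      u ^ n / n.factorial * hermiteMoment y n ^ 2 := by
  have hprod (p : ℝ × ℝ) :
      mehlerExponent u y p ^ n / n.factorial * (gaussWeight p.1 * gaussWeight p.2) =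
        u ^ n / n.factorial * ((y + p.1 * I : ℂ) ^ n * gaussWeight p.1
          * ((y + p.2 * I : ℂ) ^ n * gaussWeight p.2)) := by
    rw [mehlerExponent, mul_pow, mul_pow]; ring
  simp_rw [hprod]
  rw [integral_const_mul, Measure.volume_eq_prod,
    integral_prod_mul (fun t : ℝ => (y + t * I : ℂ) ^ n * gaussWeight t)
      (fun t : ℝ => (y + t * I : ℂ) ^ n * gaussWeight t), hermiteMoment, sq]

lemma integral_exp_mehlerExponent_mul_left (u y a : ℝ) :
    ∫ b : ℝ, cexp (mehlerExponent u y (a, b)) * (gaussWeight a * gaussWeight b) =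
      √(2 * π) * cexp ((((u ^ 2 - 1) / 2 : ℝ) : ℂ) * a ^ 2 + u * y * (1 - u) * I * a
        + (u * y ^ 2 - u ^ 2 * y ^ 2 / 2)) := by
  have hquad (b : ℝ) : cexp (mehlerExponent u y (a, b)) * (gaussWeight a * gaussWeight b) =
      cexp (((-1 / 2 : ℝ) : ℂ) * b ^ 2 + u * (y + a * I) * I * b
        + (u * (y + a * I) * y - a ^ 2 / 2)) := by
    simp only [mehlerExponent, gaussWeight, ← Complex.exp_add]
    congr 1
    push_cast
    ring
  simp_rw [hquad]
  rw [integral_cexp_quadratic_of_neg (by norm_num)]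
  congr 2
  · rw [show π / -(-1 / 2) = 2 * π by ring]
  · push_cast
    linear_combination (u ^ 2 * ((y + a * I) ^ 2 - a ^ 2) / 2 : ℂ) * I_sq

lemma integral_exp_mehlerExponent_mul {u : ℝ} (y : ℝ) (hu0 : 0 ≤ u) (hu1 : u < 1) :
    ∫ p : ℝ × ℝ, cexp (mehlerExponent u y p) * (gaussWeight p.1 * gaussWeight p.2) =
      (2 * π * ((1 - u ^ 2) ^ (-(1 : ℝ) / 2) * Real.exp (u * y ^ 2 / (1 + u))) : ℝ) := by
  have hint : Integrable fun p : ℝ × ℝ =>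
      cexp (mehlerExponent u y p) * (gaussWeight p.1 * gaussWeight p.2) :=
    (integrable_exp_norm_mehlerExponent y hu0 hu1).mono' (by fun_prop)
      (.of_forall fun p => by rw [norm_mul]; gcongr; exact norm_exp_le_exp_norm _)
  have hu2 : 0 < 1 - u ^ 2 := by nlinarith
  have hsqrt : √(2 * π) * √(π / -((u ^ 2 - 1) / 2)) =
      2 * π * (1 - u ^ 2) ^ (-(1 : ℝ) / 2) := by
    rw [← Real.sqrt_mul (by positivity), show 2 * π * (π / -((u ^ 2 - 1) / 2)) =
        (2 * π) ^ 2 / (1 - u ^ 2) by rw [neg_div', neg_sub, div_div_eq_mul_div]; ring,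
      Real.sqrt_div' _ hu2.le, Real.sqrt_sq (by positivity), neg_div, Real.rpow_neg hu2.le,
      ← Real.sqrt_eq_rpow, div_eq_mul_inv]
  have hexp : (u * y ^ 2 - u ^ 2 * y ^ 2 / 2 : ℂ)
      - (u * y * (1 - u) * I) ^ 2 / (4 * (((u ^ 2 - 1) / 2 : ℝ) : ℂ)) =
        (u * y ^ 2 / (1 + u) : ℝ) := by
    have h1 : (1 + u : ℂ) ≠ 0 := by exact_mod_cast (by linarith : (1 + u : ℝ) ≠ 0)
    have h2 : (u ^ 2 - 1 : ℂ) ≠ 0 := by exact_mod_cast (by nlinarith : (u ^ 2 - 1 : ℝ) ≠ 0)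
    push_cast
    field_simp
    linear_combination (-(4 : ℂ) * u ^ 2 * y ^ 2 * (1 - u) ^ 2 * (1 + u)) * I_sq
  rw [Measure.volume_eq_prod, integral_prod _ hint]
  simp_rw [integral_exp_mehlerExponent_mul_left]
  rw [integral_const_mul, integral_cexp_quadratic_of_neg (by nlinarith), hexp, ← mul_assoc,
    ← ofReal_mul, hsqrt, ← ofReal_exp]
  push_cast
  ring

end

/-- diagonal case of Mehler's formula. -/
theorem stmt6 (y u : ℝ) (hu0 : 0 ≤ u) (hu1 : u < 1) :
    HasSum (fun a : ℕ => (He a y) ^ 2 * u ^ a / (a.factorial : ℝ))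
      ((1 - u ^ 2) ^ (-(1 : ℝ) / 2) * Real.exp (u * y ^ 2 / (1 + u))) := by
  have h := hasSum_integral_pow_div_factorial_mul (by fun_prop) (by fun_prop)
    (integrable_exp_norm_mehlerExponent y hu0 hu1)
  simp_rw [integral_mehlerExponent_pow_mul, hermiteMoment_eq_He,
    integral_exp_mehlerExponent_mul y hu0 hu1] at h
  have hterm (n : ℕ) : (u : ℂ) ^ n / n.factorial * (He n y * √(2 * π) : ℂ) ^ 2 =
      (2 * π * (He n y ^ 2 * u ^ n / n.factorial) : ℝ) := by
    rw [mul_pow, ← ofReal_pow (√_), Real.sq_sqrt (by positivity)]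
    push_cast
    ring
  simp_rw [hterm] at h
  exact (hasSum_mul_left_iff (by positivity)).mp (hasSum_ofReal.mp h)
end

section
/- For every m ≥ 1, every y ∈ ℝ^m, and every u with 0 ≤ u < 1, the sum over all multi-indices a ∈ ℕ^m of He_a(y)²·u^{a₁+⋯+a_m} / (a₁!·a₂!⋯a_m!) converges and equals (1 − u²)^{−m/2} · exp(u·‖y‖₂² / (1 + u)). -/
open scoped BigOperators

/-!
With `w(t) = x + i t` one has `He n x = (2π)^{-1/2} ∫ w(t)^n e^{-t²/2} dt`: the case `n = 0` is
the Gaussian integral, and integrating `d/dt (w^n e^{-t²/2})` over `ℝ` gives the three-term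
recurrence. Writing `He n x ^ 2` as a double integral over `(s, t)` and summing the exponential
series of `exp (u w(s) w(t))` under the integral (dominated by
`exp (u (x² + (s² + t²)/2) - (s² + t²)/2)`, integrable since `u < 1`) turns the one-variable sum
into a Gaussian integral over `ℝ²`, which two one-dimensional Gaussian integrals evaluate to
`(1 - u²)^{-1/2} exp (u x² / (1 + u))`. The multivariate summand is a product of one-variable
summands, so the multivariate sum is the product of the one-variable sums.
-/

open MeasureTheory Real Complex Filter

lemma hasSum_pi_prod_of_nonneg {β : Type*} (m : ℕ) {f : Fin m → β → ℝ}
    {s : Fin m → ℝ} (hf : ∀ i b, 0 ≤ f i b) (hs : ∀ i, HasSum (f i) (s i)) :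
    HasSum (fun a : Fin m → β => ∏ i, f i (a i)) (∏ i, s i) := by
  induction m with
  | zero =>
    simp only [Finset.univ_eq_empty, Finset.prod_empty]
    exact hasSum_single default fun a ha => (ha (Subsingleton.elim a default)).elim
  | succ m ih =>
    have htail :
        HasSum (fun a : Fin m → β => ∏ i : Fin m, f i.succ (a i)) (∏ i : Fin m, s i.succ) :=
      ih (fun i => hf i.succ) fun i => hs i.succ
    have hsummable := (hs 0).summable.mul_of_nonneg htail.summable (hf 0) fun a =>
      Finset.prod_nonneg fun i _ => hf i.succ (a i)
    have hpair := (hs 0).mul htail hsummable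
    rw [Fin.prod_univ_succ, ← (Fin.consEquiv fun _ => β).hasSum_iff]
    refine hpair.congr_fun fun a => ?_
    simp only [Function.comp_apply, Fin.consEquiv_apply, Fin.prod_univ_succ, Fin.cons_zero,
      Fin.cons_succ]

lemma norm_cexp_neg_sq_div_two (t : ℝ) : ‖cexp (-(t : ℂ) ^ 2 / 2)‖ = rexp (-t ^ 2 / 2) := by
  rw [Complex.norm_exp]; norm_cast

lemma integral_cexp_neg_mul_sq_div_two_add {a : ℝ} (ha : 0 < a) (c d : ℂ) :
    ∫ t : ℝ, cexp (-(a / 2 : ℂ) * t ^ 2 + c * t + d) =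
      √(2 * π / a) * cexp (d + c ^ 2 / (2 * a)) := by
  have hb : (-(a / 2 : ℂ)).re < 0 := by simpa using half_pos ha
  rw [integral_cexp_quadratic hb, neg_neg]
  congr 1
  · rw [show (π : ℂ) / (a / 2) = ((2 * π / a : ℝ) : ℂ) by push_cast; field_simp,
      show (1 / 2 : ℂ) = ((1 / 2 : ℝ) : ℂ) by norm_num, ← ofReal_cpow (by positivity),
      Real.sqrt_eq_rpow]
  · congr 1
    have : (a : ℂ) ≠ 0 := by exact_mod_cast ha.ne'
    field_simp
    ring

lemma integral_cexp_neg_sq_div_two : ∫ t : ℝ, cexp (-(t : ℂ) ^ 2 / 2) = √(2 * π) := by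
  have h := integral_cexp_neg_mul_sq_div_two_add one_pos 0 0
  simp only [ofReal_one, zero_mul, add_zero, div_one, zero_pow two_ne_zero, zero_div,
    Complex.exp_zero, mul_one] at h
  rw [← h]
  congr 1 with t
  ring_nf

namespace Hermite

variable (x : ℝ)

noncomputable def integrand (n : ℕ) (t : ℝ) : ℂ := (x + t * I) ^ n * cexp (-(t : ℂ) ^ 2 / 2)

lemma continuous_integrand (n : ℕ) : Continuous (integrand x n) := by
  unfold integrand; fun_prop

lemma norm_integrand_le (n : ℕ) (t : ℝ) :
    ‖integrand x n t‖ ≤ n.factorial * rexp (|x| + 1) * rexp (-(1 / 4) * t ^ 2) := by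
  have hw : ‖(x : ℂ) + t * I‖ ≤ |x| + |t| := by
    refine (norm_add_le _ _).trans ?_
    simp
  calc ‖integrand x n t‖ ≤ (|x| + |t|) ^ n * rexp (-t ^ 2 / 2) := by
        rw [integrand, norm_mul, norm_pow, norm_cexp_neg_sq_div_two]
        gcongr
    _ ≤ n.factorial * rexp (|x| + |t|) * rexp (-t ^ 2 / 2) := by
        gcongr
        have := Real.pow_div_factorial_le_exp (x := |x| + |t|) (by positivity) n
        rwa [div_le_iff₀ (by positivity), mul_comm] at this
    _ ≤ n.factorial * rexp (|x| + 1) * rexp (-(1 / 4) * t ^ 2) := by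
        rw [mul_assoc, mul_assoc, ← Real.exp_add, ← Real.exp_add]
        gcongr _ * rexp ?_
        nlinarith [sq_nonneg (|t| - 2), sq_abs t]

lemma integrable_integrand (n : ℕ) : Integrable (integrand x n) :=
  ((integrable_exp_neg_mul_sq (by norm_num : (0 : ℝ) < 1 / 4)).const_mul
    (n.factorial * rexp (|x| + 1))).mono' (continuous_integrand x n).aestronglyMeasurable
    (Eventually.of_forall (norm_integrand_le x n))

/-- `t · w(t)^n = -i (w(t)^(n+1) - x · w(t)^n)`. -/
lemma integrable_ofReal_mul_integrand (n : ℕ) :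
    Integrable fun t : ℝ => t * integrand x n t := by
  refine (((integrable_integrand x (n + 1)).sub ((integrable_integrand x n).const_mul x)).const_mul
    (-I)).congr (Eventually.of_forall fun t => ?_)
  simp only [Pi.sub_apply, integrand]
  linear_combination -(t : ℂ) * ((x : ℂ) + t * I) ^ n * cexp (-(t : ℂ) ^ 2 / 2) * I_sq

/-- For `n = 0` the truncated index `n - 1 = 0` is harmless, being multiplied by `n`. -/
lemma hasDerivAt_integrand (n : ℕ) (t : ℝ) :
    HasDerivAt (integrand x n) (n * I * integrand x (n - 1) t - t * integrand x n t) t := by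
  have hw : HasDerivAt (fun s : ℝ => (x : ℂ) + s * I) I t := by
    simpa using ((hasDerivAt_id t).ofReal_comp.mul_const I).const_add (x : ℂ)
  have hE : HasDerivAt (fun s : ℝ => cexp (-(s : ℂ) ^ 2 / 2))
      (-t * cexp (-(t : ℂ) ^ 2 / 2)) t := by
    refine ((((hasDerivAt_id t).ofReal_comp.pow 2).neg.div_const 2).cexp).congr_deriv ?_
    simp only [Pi.neg_apply, Pi.pow_apply, id, ofReal_one]
    ring_nf
  refine ((hw.pow n).mul hE).congr_deriv ?_
  simp only [integrand, Pi.pow_apply]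
  ring

lemma integral_ofReal_mul_integrand (n : ℕ) :
    ∫ t : ℝ, t * integrand x n t = n * I * ∫ t : ℝ, integrand x (n - 1) t := by
  have h := integral_eq_zero_of_hasDerivAt_of_integrable (hasDerivAt_integrand x n)
    (((integrable_integrand x (n - 1)).const_mul _).sub (integrable_ofReal_mul_integrand x n))
    (integrable_integrand x n)
  rw [integral_sub ((integrable_integrand x (n - 1)).const_mul _)
    (integrable_ofReal_mul_integrand x n), integral_const_mul, sub_eq_zero] at h
  exact h.symm

lemma integral_integrand_succ (n : ℕ) :
    ∫ t : ℝ, integrand x (n + 1) t =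
      x * (∫ t : ℝ, integrand x n t) - n * ∫ t : ℝ, integrand x (n - 1) t := by
  have h (t : ℝ) : integrand x (n + 1) t = x * integrand x n t + I * (t * integrand x n t) := by
    simp only [integrand, pow_succ]; ring
  rw [funext h, integral_add ((integrable_integrand x n).const_mul _)
    ((integrable_ofReal_mul_integrand x n).const_mul _), integral_const_mul, integral_const_mul,
    integral_ofReal_mul_integrand]
  linear_combination (n : ℂ) * (∫ t : ℝ, integrand x (n - 1) t) * I_sq

lemma integral_integrand : ∀ n, ∫ t : ℝ, integrand x n t = √(2 * π) * He n x
  | 0 => by simp [integrand, He, integral_cexp_neg_sq_div_two]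
  | 1 => by
    rw [integral_integrand_succ, integral_integrand 0]
    simp only [He, Nat.cast_zero, zero_mul, sub_zero, ofReal_one]
    ring
  | n + 2 => by
    rw [integral_integrand_succ x (n + 1), Nat.add_sub_cancel, integral_integrand (n + 1),
      integral_integrand n, He]
    push_cast; ring

lemma norm_add_mul_I_mul_norm_add_mul_I_le (s t : ℝ) :
    ‖(x : ℂ) + s * I‖ * ‖(x : ℂ) + t * I‖ ≤ x ^ 2 + (s ^ 2 + t ^ 2) / 2 := by
  have hs := Complex.sq_norm ((x : ℂ) + s * I)
  have ht := Complex.sq_norm ((x : ℂ) + t * I)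
  rw [normSq_add_mul_I] at hs ht
  nlinarith [two_mul_le_add_sq ‖(x : ℂ) + s * I‖ ‖(x : ℂ) + t * I‖]

variable (u : ℝ)

noncomputable def mehlerKernel (p : ℝ × ℝ) : ℂ :=
  cexp (u * ((x + p.1 * I) * (x + p.2 * I)) - (p.1 : ℂ) ^ 2 / 2 - (p.2 : ℂ) ^ 2 / 2)

noncomputable def mehlerMajorant (p : ℝ × ℝ) : ℝ :=
  rexp (u * (x ^ 2 + (p.1 ^ 2 + p.2 ^ 2) / 2) - (p.1 ^ 2 + p.2 ^ 2) / 2)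

lemma hasSum_integrand_mul_integrand (p : ℝ × ℝ) :
    HasSum (fun n => integrand x n p.1 * integrand x n p.2 * (u ^ n / n.factorial))
      (mehlerKernel x u p) := by
  have h := (NormedSpace.expSeries_div_hasSum_exp ((u : ℂ) * ((x + p.1 * I) * (x + p.2 * I)))
    ).mul_right (cexp (-(p.1 : ℂ) ^ 2 / 2) * cexp (-(p.2 : ℂ) ^ 2 / 2))
  rw [← Complex.exp_eq_exp_ℂ] at h
  have hterm (n : ℕ) : integrand x n p.1 * integrand x n p.2 * (u ^ n / n.factorial) =
      (u * ((x + p.1 * I) * (x + p.2 * I))) ^ n / n.factorial *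
        (cexp (-(p.1 : ℂ) ^ 2 / 2) * cexp (-(p.2 : ℂ) ^ 2 / 2)) := by
    simp only [integrand, mul_pow]; ring
  have hkernel : mehlerKernel x u p = cexp (u * ((x + p.1 * I) * (x + p.2 * I))) *
      (cexp (-(p.1 : ℂ) ^ 2 / 2) * cexp (-(p.2 : ℂ) ^ 2 / 2)) := by
    simp only [mehlerKernel, ← Complex.exp_add]; ring_nf
  simp_rw [hterm, hkernel]
  exact h

lemma norm_integrand_mul_integrand_le (hu0 : 0 ≤ u) (n : ℕ) (p : ℝ × ℝ) :
    ‖integrand x n p.1 * integrand x n p.2 * (u ^ n / n.factorial)‖ ≤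
      (u * (x ^ 2 + (p.1 ^ 2 + p.2 ^ 2) / 2)) ^ n / n.factorial *
        rexp (-(p.1 ^ 2 + p.2 ^ 2) / 2) := by
  have hu : ‖(u : ℂ)‖ = u := by rw [norm_real, Real.norm_of_nonneg hu0]
  simp only [integrand, norm_mul, norm_div, norm_pow, norm_cexp_neg_sq_div_two, hu,
    Complex.norm_natCast]
  calc _ = (u * (‖(x : ℂ) + p.1 * I‖ * ‖(x : ℂ) + p.2 * I‖)) ^ n / n.factorial *
        (rexp (-p.1 ^ 2 / 2) * rexp (-p.2 ^ 2 / 2)) := by rw [mul_pow, mul_pow]; ring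
    _ ≤ (u * (x ^ 2 + (p.1 ^ 2 + p.2 ^ 2) / 2)) ^ n / n.factorial *
        (rexp (-p.1 ^ 2 / 2) * rexp (-p.2 ^ 2 / 2)) := by
      gcongr
      exact norm_add_mul_I_mul_norm_add_mul_I_le x p.1 p.2
    _ = _ := by rw [← Real.exp_add]; ring_nf

lemma norm_mehlerKernel_le (hu0 : 0 ≤ u) (p : ℝ × ℝ) :
    ‖mehlerKernel x u p‖ ≤ mehlerMajorant x u p := by
  rw [mehlerKernel, mehlerMajorant, Complex.norm_exp]
  gcongr
  have h := (re_le_norm ((x + p.1 * I) * (x + p.2 * I))).trans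
    ((norm_mul_le _ _).trans (norm_add_mul_I_mul_norm_add_mul_I_le x p.1 p.2))
  simp only [sub_re, re_ofReal_mul, div_ofNat_re]
  norm_cast
  nlinarith

lemma integrable_mehlerMajorant (hu1 : u < 1) : Integrable (mehlerMajorant x u) := by
  have hb : 0 < (1 - u) / 2 := by linarith
  rw [Measure.volume_eq_prod]
  refine (((integrable_exp_neg_mul_sq hb).mul_prod (integrable_exp_neg_mul_sq hb)).const_mul
    (rexp (u * x ^ 2))).congr (Eventually.of_forall fun p => ?_)
  simp only [mehlerMajorant, ← Real.exp_add]
  ring_nf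

lemma hasSum_integral_integrand_sq (hu0 : 0 ≤ u) (hu1 : u < 1) :
    HasSum (fun n => (∫ t : ℝ, integrand x n t) ^ 2 * (u ^ n / n.factorial))
      (∫ p : ℝ × ℝ, mehlerKernel x u p) := by
  have hF (n : ℕ) :
      ∫ p : ℝ × ℝ, integrand x n p.1 * integrand x n p.2 * (u ^ n / n.factorial) =
        (∫ t : ℝ, integrand x n t) ^ 2 * (u ^ n / n.factorial) := by
    rw [integral_mul_const, Measure.volume_eq_prod, integral_prod_mul, sq]
  simp_rw [← hF]
  refine hasSum_integral_of_dominated_convergence _ (fun n => ?_)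
    (fun n => Eventually.of_forall (norm_integrand_mul_integrand_le x u hu0 n))
    (Eventually.of_forall fun p => (Real.summable_pow_div_factorial _).mul_right _) ?_
    (Eventually.of_forall (hasSum_integrand_mul_integrand x u))
  · exact (((continuous_integrand x n).comp continuous_fst).mul
      ((continuous_integrand x n).comp continuous_snd)).mul continuous_const |>.aestronglyMeasurable
  · refine (integrable_mehlerMajorant x u hu1).congr (Eventually.of_forall fun p => ?_)
    rw [mehlerMajorant]
    dsimp only
    rw [tsum_mul_right, (NormedSpace.expSeries_div_hasSum_exp _).tsum_eq, ← Real.exp_eq_exp_ℝ,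
      ← Real.exp_add]
    ring_nf

lemma integral_mehlerKernel (hu0 : 0 ≤ u) (hu1 : u < 1) :
    ∫ p : ℝ × ℝ, mehlerKernel x u p =
      ((2 * π / √(1 - u ^ 2) * rexp (u * x ^ 2 / (1 + u)) : ℝ) : ℂ) := by
  have hu2 : 0 < 1 - u ^ 2 := by nlinarith
  have hint : Integrable (mehlerKernel x u) ((volume : Measure ℝ).prod volume) := by
    rw [← Measure.volume_eq_prod]
    refine (integrable_mehlerMajorant x u hu1).mono' ?_
      (Eventually.of_forall (norm_mehlerKernel_le x u hu0))
    exact (by unfold mehlerKernel; fun_prop : Continuous (mehlerKernel x u)).aestronglyMeasurable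
  have inner (s : ℝ) : ∫ t : ℝ, mehlerKernel x u (s, t) =
      √(2 * π) * cexp (-((1 - u ^ 2 : ℝ) / 2 : ℂ) * s ^ 2 + (u * x * (1 - u) * I) * s
        + (u * x ^ 2 - u ^ 2 * x ^ 2 / 2)) := by
    have h := integral_cexp_neg_mul_sq_div_two_add one_pos (u * (x + s * I) * I)
      (u * x * (x + s * I) - (s : ℂ) ^ 2 / 2)
    rw [div_one] at h
    convert h using 3
    · unfold mehlerKernel; push_cast; ring_nf
    · push_cast
      linear_combination -(u : ℂ) ^ 2 / 2 * (((x : ℂ) + s * I) ^ 2 - (s : ℂ) ^ 2) * I_sq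
  rw [Measure.volume_eq_prod, integral_prod _ hint]
  simp only [inner]
  rw [integral_const_mul, integral_cexp_neg_mul_sq_div_two_add hu2]
  have hexponent :
      (u * x ^ 2 - u ^ 2 * x ^ 2 / 2 + (u * x * (1 - u) * I) ^ 2 / (2 * (1 - u ^ 2 : ℝ)) : ℂ) =
        (u * x ^ 2 / (1 + u) : ℝ) := by
    have h1 : (1 + u : ℂ) ≠ 0 := by exact_mod_cast (by linarith : (1 + u) ≠ 0)
    have h2 : (1 - u : ℂ) ≠ 0 := by exact_mod_cast (by linarith : (1 - u) ≠ 0)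
    push_cast
    rw [show (1 : ℂ) - u ^ 2 = (1 + u) * (1 - u) by ring]
    field_simp
    linear_combination (u : ℂ) ^ 2 * x ^ 2 * (1 - u) * I_sq
  rw [hexponent, ← ofReal_exp]
  norm_cast
  rw [Real.sqrt_div' _ hu2.le, ← mul_assoc, mul_div_assoc', Real.mul_self_sqrt (by positivity)]

lemma hasSum_He_sq_mul_pow_div_factorial (hu0 : 0 ≤ u) (hu1 : u < 1) :
    HasSum (fun n => He n x ^ 2 * u ^ n / n.factorial)
      ((1 - u ^ 2) ^ (-(1 : ℝ) / 2) * rexp (u * x ^ 2 / (1 + u))) := by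
  have hu2 : 0 < 1 - u ^ 2 := by nlinarith
  have h := hasSum_integral_integrand_sq x u hu0 hu1
  simp only [integral_integrand, integral_mehlerKernel x u hu0 hu1] at h
  have hterm (n : ℕ) : ((√(2 * π) : ℂ) * He n x) ^ 2 * (u ^ n / n.factorial) =
      ((2 * π * (He n x ^ 2 * u ^ n / n.factorial) : ℝ) : ℂ) := by
    rw [mul_pow, ← ofReal_pow, Real.sq_sqrt (by positivity)]
    push_cast; ring
  simp_rw [hterm] at h
  have hvalue : (1 - u ^ 2) ^ (-(1 : ℝ) / 2) * rexp (u * x ^ 2 / (1 + u)) =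
      2 * π / √(1 - u ^ 2) * rexp (u * x ^ 2 / (1 + u)) / (2 * π) := by
    rw [neg_div, Real.rpow_neg hu2.le, ← Real.sqrt_eq_rpow]
    field_simp
  rw [hvalue]
  exact ((Complex.hasSum_ofReal.mp h).div_const (2 * π)).congr_fun fun n => by field_simp

end Hermite

theorem stmt7_general (m : ℕ) (y : Fin m → ℝ) (u : ℝ) (hu0 : 0 ≤ u) (hu1 : u < 1) :
    HasSum (fun a : Fin m → ℕ =>
        (∏ i, He (a i) (y i)) ^ 2 * u ^ (∑ i, a i) / (∏ i, ((a i).factorial : ℝ)))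
      ((1 - u ^ 2) ^ (-(m : ℝ) / 2) * Real.exp (u * (∑ i, (y i) ^ 2) / (1 + u))) := by
  have h := hasSum_pi_prod_of_nonneg m
    (fun i n => div_nonneg (mul_nonneg (sq_nonneg _) (pow_nonneg hu0 n)) n.factorial.cast_nonneg)
    fun i => Hermite.hasSum_He_sq_mul_pow_div_factorial (y i) u hu0 hu1
  rw [Finset.prod_mul_distrib, Finset.prod_const, Finset.card_fin,
    ← Real.rpow_mul_natCast (by nlinarith), ← Real.exp_sum, ← Finset.sum_div,
    ← Finset.mul_sum] at h
  rw [show -(m : ℝ) / 2 = -1 / 2 * m by ring]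
  refine h.congr_fun fun a => ?_
  rw [← Finset.prod_pow, ← Finset.prod_pow_eq_pow_sum, ← Finset.prod_mul_distrib,
    ← Finset.prod_div_distrib]

/-- multivariate diagonal Mehler formula. -/
theorem stmt7 (m : ℕ) (hm : 1 ≤ m) (y : Fin m → ℝ) (u : ℝ) (hu0 : 0 ≤ u) (hu1 : u < 1) :
    HasSum (fun a : Fin m → ℕ =>
        (∏ i, He (a i) (y i)) ^ 2 * u ^ (∑ i, a i) / (∏ i, ((a i).factorial : ℝ)))
      ((1 - u ^ 2) ^ (-(m : ℝ) / 2) * Real.exp (u * (∑ i, (y i) ^ 2) / (1 + u))) :=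
  stmt7_general m y u hu0 hu1
end

section
/- Let m ≥ 1, l ∈ ℕ, and let (c_a) be real coefficients indexed by multi-indices a ∈ ℕ^m with a₁+⋯+a_m = l satisfying ∑_a c_a² ≤ 1. Define p(y) = ∑_{a: a₁+⋯+a_m = l} c_a · He_a(y) / √(l!). Then for every y ∈ ℝ^m and every u ∈ (0,1): p(y)² ≤ u^{−l} · (1 − u²)^{−m/2} · exp(u·‖y‖₂² / (1 + u)). -/
open scoped BigOperators

/-!
By Cauchy–Schwarz, `p(y)² ≤ ∑_{|a| = l} He_a(y)² / l!`. Since `∏ aᵢ!` divides `l!`, each term is at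
most `u⁻ˡ ∏ᵢ u^{aᵢ} He_{aᵢ}(yᵢ)² / aᵢ!`, and enlarging the sum to all `a` with `aᵢ ≤ l`
factorizes it into one-dimensional sums `∑_{n ≤ l} uⁿ He_n(x)² / n!`.

These are bounded by Bessel's inequality in `L²(e^{-z²/2} dz)`, in which the `He_n` are orthogonal
with `‖He_n‖² = n! √(2π)` (Gaussian integration by parts, `∫ z P e^{-z²/2} = ∫ P' e^{-z²/2}`). It is
applied to the density `f` of `N(√u x, 1 - u)` with respect to the standard Gaussian: then
`⟨f, He_n⟩ = √(2π) E[He_n(√u x + √(1 - u) Z)] = √(2π) u^{n/2} He_n(x)`, while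
`‖f‖² = √(2π) e^{u x² / (1 + u)} / √(1 - u²)` is an explicit Gaussian integral.
-/

open Polynomial MeasureTheory Real
open scoped Nat

noncomputable def hePoly : ℕ → ℝ[X]
  | 0 => 1
  | 1 => X
  | n + 2 => X * hePoly (n + 1) - C ((n : ℝ) + 1) * hePoly n

theorem hePoly_add_two (n : ℕ) :
    hePoly (n + 2) = X * hePoly (n + 1) - C ((n : ℝ) + 1) * hePoly n := by
  rw [hePoly]

theorem derivative_hePoly_succ (n : ℕ) :
    derivative (hePoly (n + 1)) = C ((n : ℝ) + 1) * hePoly n := by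
  induction n using Nat.twoStepInduction with
  | zero => simp [hePoly]
  | one =>
    simp [hePoly]
    ring
  | more n ih₁ ih₂ =>
    rw [hePoly_add_two, derivative_sub, derivative_mul, derivative_X, derivative_C_mul, ih₂, ih₁,
      hePoly_add_two]
    simp only [Nat.cast_add, Nat.cast_one, map_add, map_natCast, map_one]
    ring

theorem hePoly_succ (n : ℕ) : hePoly (n + 1) = X * hePoly n - derivative (hePoly n) := by
  cases n with
  | zero => simp [hePoly]
  | succ n => rw [hePoly_add_two, derivative_hePoly_succ]

theorem integrable_eval_mul_exp_neg_mul_sq (P : ℝ[X]) {a : ℝ} (ha : 0 < a) :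
    Integrable fun z => P.eval z * exp (-a * z ^ 2) := by
  simp_rw [eval_eq_sum_range, Finset.sum_mul]
  refine integrable_finsetSum _ fun i _ => ?_
  simpa [mul_assoc, Real.rpow_natCast] using
    (integrable_rpow_mul_exp_neg_mul_sq ha (s := i)
      (by linarith [i.cast_nonneg (α := ℝ)])).const_mul (P.coeff i)

theorem integrable_eval_mul_exp_neg_mul_sub_sq (P : ℝ[X]) {a : ℝ} (ha : 0 < a) (d : ℝ) :
    Integrable fun z => P.eval z * exp (-a * (z - d) ^ 2) := by
  have h := (integrable_eval_mul_exp_neg_mul_sq (P.comp (X + C d)) ha).comp_sub_right d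
  simp only [eval_comp, eval_add, eval_X, eval_C, sub_add_cancel] at h
  exact h

theorem integral_exp_neg_mul_sub_sq (a d : ℝ) : ∫ z, exp (-a * (z - d) ^ 2) = √(π / a) :=
  (integral_sub_right_eq_self (fun z => exp (-a * z ^ 2)) d).trans (integral_gaussian a)

theorem integrable_eval_mul_exp_neg_sq_div_two (P : ℝ[X]) :
    Integrable fun z => P.eval z * exp (-z ^ 2 / 2) := by
  simpa [neg_div, div_eq_inv_mul] using
    integrable_eval_mul_exp_neg_mul_sq P (a := 1 / 2) (by norm_num)

noncomputable def gaussianIntegral : ℝ[X] →ₗ[ℝ] ℝ where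
  toFun P := ∫ z, P.eval z * exp (-z ^ 2 / 2)
  map_add' P Q := by
    simp only [eval_add, add_mul]
    exact integral_add (integrable_eval_mul_exp_neg_sq_div_two P)
      (integrable_eval_mul_exp_neg_sq_div_two Q)
  map_smul' r P := by simp [mul_assoc, integral_const_mul]

theorem gaussianIntegral_apply (P : ℝ[X]) :
    gaussianIntegral P = ∫ z, P.eval z * exp (-z ^ 2 / 2) := rfl

theorem gaussianIntegral_one : gaussianIntegral 1 = √(2 * π) := by
  simpa [gaussianIntegral_apply, neg_div, div_eq_inv_mul] using integral_gaussian (1 / 2)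

theorem gaussianIntegral_X_mul (P : ℝ[X]) :
    gaussianIntegral (X * P) = gaussianIntegral (derivative P) := by
  have hw (z : ℝ) : HasDerivAt (fun z => exp (-z ^ 2 / 2)) (-z * exp (-z ^ 2 / 2)) z :=
    (((hasDerivAt_id z).pow 2).neg.div_const 2).exp.congr_deriv (by simp; ring)
  have hparts := integral_mul_deriv_eq_deriv_mul_of_integrable (u := fun z => P.eval z)
    (fun z _ => P.hasDerivAt z) (fun z _ => hw z)
    ((integrable_eval_mul_exp_neg_sq_div_two (-(X * P))).congr (ae_of_all _ fun z => by
      simp only [eval_neg, eval_mul, eval_X, Pi.mul_apply]; ring))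
    (integrable_eval_mul_exp_neg_sq_div_two (derivative P))
    (integrable_eval_mul_exp_neg_sq_div_two P)
  simp only [gaussianIntegral_apply, eval_mul, eval_X]
  rw [← neg_neg (∫ z, eval z (derivative P) * _), ← hparts, ← integral_neg]
  congr 1 with z
  ring

theorem gaussianIntegral_hePoly_succ_mul (n : ℕ) (Q : ℝ[X]) :
    gaussianIntegral (hePoly (n + 1) * Q) = gaussianIntegral (hePoly n * derivative Q) := by
  rw [hePoly_succ, sub_mul, map_sub, mul_assoc, gaussianIntegral_X_mul, derivative_mul, map_add,
    add_sub_cancel_left]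

theorem gaussianIntegral_hePoly_succ (n : ℕ) : gaussianIntegral (hePoly (n + 1)) = 0 := by
  simpa using gaussianIntegral_hePoly_succ_mul n 1

theorem gaussianIntegral_hePoly_mul_hePoly (n k : ℕ) :
    gaussianIntegral (hePoly n * hePoly k) = if n = k then n ! * √(2 * π) else 0 := by
  induction n generalizing k with
  | zero =>
    cases k with
    | zero => simp [hePoly, gaussianIntegral_one]
    | succ k => simp [hePoly, gaussianIntegral_hePoly_succ]
  | succ n ih =>
    cases k with
    | zero => simp [hePoly, gaussianIntegral_hePoly_succ]
    | succ k =>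
      rw [gaussianIntegral_hePoly_succ_mul, derivative_hePoly_succ, mul_left_comm, ← smul_eq_C_mul,
        map_smul, ih, smul_eq_mul]
      split_ifs <;> simp_all [Nat.factorial_succ]
      ring

theorem gaussianIntegral_hePoly_comp {s σ : ℝ} (hσ : σ ^ 2 = 1 - s ^ 2) (x : ℝ) (n : ℕ) :
    gaussianIntegral ((hePoly n).comp (C (s * x) + C σ * X)) = s ^ n * He n x * √(2 * π) := by
  set A : ℝ[X] := C (s * x) + C σ * X
  induction n using Nat.twoStepInduction with
  | zero => simp [hePoly, He, gaussianIntegral_one]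
  | one =>
    have : (hePoly 1).comp A = (s * x) • 1 + σ • (X * 1) := by simp [A, hePoly, smul_eq_C_mul]
    rw [this, map_add, map_smul, map_smul, gaussianIntegral_X_mul]
    simp [He, gaussianIntegral_one]
  | more n ih₀ ih₁ =>
    have hX : gaussianIntegral (X * (hePoly (n + 1)).comp A)
        = σ * (n + 1) * gaussianIntegral ((hePoly n).comp A) := by
      rw [gaussianIntegral_X_mul, derivative_comp, derivative_hePoly_succ]
      have hA : derivative A = C σ := by simp [A]
      have hsmul : C σ * (C ((n : ℝ) + 1) * (hePoly n).comp A)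
          = (σ * (n + 1)) • (hePoly n).comp A := by
        rw [smul_eq_C_mul, C_mul]
        ring
      rw [hA, mul_comp, C_comp, hsmul, map_smul, smul_eq_mul]
    have hrec : (hePoly (n + 2)).comp A = (s * x) • (hePoly (n + 1)).comp A
        + σ • (X * (hePoly (n + 1)).comp A) - ((n : ℝ) + 1) • (hePoly n).comp A := by
      rw [hePoly_add_two]
      simp [A, smul_eq_C_mul]
      ring
    rw [hrec, map_sub, map_add, map_smul, map_smul, map_smul, hX, ih₀, ih₁, He, smul_eq_mul,
      smul_eq_mul, smul_eq_mul]
    linear_combination (n + 1) * s ^ n * He n x * √(2 * π) * hσ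

theorem integral_eval_mul_exp_neg_sub_sq_div (P : ℝ[X]) (μ : ℝ) {v : ℝ} (hv : 0 < v) :
    ∫ z, P.eval z * exp (-(z - μ) ^ 2 / (2 * v))
      = √v * gaussianIntegral (P.comp (C μ + C √v * X)) := by
  set g : ℝ → ℝ := fun z => P.eval z * exp (-(z - μ) ^ 2 / (2 * v))
  have hσ : 0 < √v := sqrt_pos.2 hv
  have hg (t : ℝ) : g (μ + √v * t) = (P.comp (C μ + C √v * X)).eval t * exp (-t ^ 2 / 2) := by
    simp only [g, eval_comp, eval_add, eval_mul, eval_C, eval_X, add_sub_cancel_left, mul_pow,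
      sq_sqrt hv.le]
    field_simp
  calc ∫ z, g z
      = √v * (|(√v)⁻¹| * ∫ z, g (μ + z)) := by
        rw [integral_add_left_eq_self, abs_inv, abs_of_pos hσ, mul_inv_cancel_left₀ hσ.ne']
    _ = √v * gaussianIntegral (P.comp (C μ + C √v * X)) := by
        rw [← smul_eq_mul (a := |(√v)⁻¹|), ← Measure.integral_comp_mul_left (fun z => g (μ + z)) √v]
        simp_rw [hg]
        rfl

theorem integral_sub_eval_sq_mul_exp {f : ℝ → ℝ}
    (hf : Integrable fun z => f z ^ 2 * exp (-z ^ 2 / 2)) {G : ℝ[X]}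
    (hfG : Integrable fun z => f z * G.eval z * exp (-z ^ 2 / 2)) :
    ∫ z, (f z - G.eval z) ^ 2 * exp (-z ^ 2 / 2)
      = (∫ z, f z ^ 2 * exp (-z ^ 2 / 2)) - 2 * (∫ z, f z * G.eval z * exp (-z ^ 2 / 2))
        + gaussianIntegral (G * G) := by
  have hpoint (z : ℝ) : (f z - G.eval z) ^ 2 * exp (-z ^ 2 / 2)
      = (f z ^ 2 * exp (-z ^ 2 / 2) - 2 * (f z * G.eval z * exp (-z ^ 2 / 2)))
        + (G * G).eval z * exp (-z ^ 2 / 2) := by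
    rw [eval_mul]
    ring
  have hsub : Integrable fun z => f z ^ 2 * exp (-z ^ 2 / 2)
      - 2 * (f z * G.eval z * exp (-z ^ 2 / 2)) := hf.sub (hfG.const_mul 2)
  simp_rw [hpoint]
  rw [integral_add hsub (integrable_eval_mul_exp_neg_sq_div_two _),
    integral_sub hf (hfG.const_mul 2), integral_const_mul, gaussianIntegral_apply]

theorem sum_sq_integral_mul_hePoly_le {f : ℝ → ℝ}
    (hf : Integrable fun z => f z ^ 2 * exp (-z ^ 2 / 2))
    (hfP : ∀ P : ℝ[X], Integrable fun z => f z * P.eval z * exp (-z ^ 2 / 2)) (N : ℕ) :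
    ∑ n ∈ Finset.range N, (∫ z, f z * (hePoly n).eval z * exp (-z ^ 2 / 2)) ^ 2 / (n ! * √(2 * π))
      ≤ ∫ z, f z ^ 2 * exp (-z ^ 2 / 2) := by
  set a : ℕ → ℝ := fun n => ∫ z, f z * (hePoly n).eval z * exp (-z ^ 2 / 2)
  set c : ℕ → ℝ := fun n => a n / (n ! * √(2 * π))
  -- `G` is the orthogonal projection of `f` onto the span of the `hePoly n`, `n < N`.
  set G : ℝ[X] := ∑ n ∈ Finset.range N, c n • hePoly n
  set S := ∑ n ∈ Finset.range N, a n ^ 2 / (n ! * √(2 * π))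
  have hca (n : ℕ) : c n * a n = a n ^ 2 / (n ! * √(2 * π)) := by
    simp only [c]
    ring
  have hcross : ∫ z, f z * G.eval z * exp (-z ^ 2 / 2) = S := by
    have hterm (n : ℕ) :
        ∫ z, f z * (c n • hePoly n).eval z * exp (-z ^ 2 / 2) = c n * a n := by
      simp only [eval_smul, smul_eq_mul, a, ← integral_const_mul]
      congr 1 with z
      ring
    simp_rw [G, eval_finsetSum, Finset.mul_sum, Finset.sum_mul]
    rw [integral_finsetSum _ fun n _ => hfP (c n • hePoly n)]
    simp_rw [hterm, hca]
    rfl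
  have hGG : gaussianIntegral (G * G) = S := by
    simp_rw [G, Finset.sum_mul_sum, map_sum, smul_mul_smul_comm, map_smul,
      gaussianIntegral_hePoly_mul_hePoly, smul_eq_mul, mul_ite, mul_zero, Finset.sum_ite_eq]
    refine Finset.sum_congr rfl fun n hn => ?_
    rw [if_pos hn, ← hca]
    simp only [c]
    field_simp
  have hexpand := integral_sub_eval_sq_mul_exp hf (hfP G)
  have hnonneg : 0 ≤ ∫ z, (f z - G.eval z) ^ 2 * exp (-z ^ 2 / 2) :=
    integral_nonneg fun z => by positivity
  linarith

/-- The density of `N(√u x, 1 - u)` with respect to the standard Gaussian measure. -/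
noncomputable def mehlerDensity (u x z : ℝ) : ℝ :=
  exp (z ^ 2 / 2 - (z - √u * x) ^ 2 / (2 * (1 - u))) / √(1 - u)

section MehlerDensity

variable {u : ℝ} (x : ℝ)

theorem mehlerDensity_mul_eval_mul_exp (P : ℝ[X]) (z : ℝ) :
    mehlerDensity u x z * P.eval z * exp (-z ^ 2 / 2)
      = P.eval z * exp (-(z - √u * x) ^ 2 / (2 * (1 - u))) / √(1 - u) := by
  rw [mehlerDensity, mul_right_comm, div_mul_eq_mul_div, ← exp_add]
  ring_nf

theorem integrable_mehlerDensity_mul_eval (hu1 : u < 1) (P : ℝ[X]) :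
    Integrable fun z => mehlerDensity u x z * P.eval z * exp (-z ^ 2 / 2) := by
  have ha : 0 < 1 / (2 * (1 - u)) := by
    have : 0 < 1 - u := by linarith
    positivity
  refine ((integrable_eval_mul_exp_neg_mul_sub_sq P ha (√u * x)).div_const √(1 - u)).congr
    (ae_of_all _ fun z => ?_)
  dsimp only
  rw [mehlerDensity_mul_eval_mul_exp]
  ring_nf

theorem integral_mehlerDensity_mul_hePoly (hu0 : 0 ≤ u) (hu1 : u < 1) (n : ℕ) :
    ∫ z, mehlerDensity u x z * (hePoly n).eval z * exp (-z ^ 2 / 2)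
      = √u ^ n * He n x * √(2 * π) := by
  have hσ : √(1 - u) ^ 2 = 1 - √u ^ 2 := by rw [sq_sqrt hu0, sq_sqrt (by linarith)]
  simp_rw [mehlerDensity_mul_eval_mul_exp, integral_div,
    integral_eval_mul_exp_neg_sub_sq_div _ _ (by linarith : 0 < 1 - u),
    gaussianIntegral_hePoly_comp hσ]
  have : 0 < √(1 - u) := sqrt_pos.2 (by linarith)
  field_simp

theorem mehlerDensity_sq_mul_exp (hu0 : 0 ≤ u) (hu1 : u < 1) (z : ℝ) :
    mehlerDensity u x z ^ 2 * exp (-z ^ 2 / 2) = exp (u * x ^ 2 / (1 + u)) / (1 - u)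
      * exp (-((1 + u) / (2 * (1 - u))) * (z - 2 * √u * x / (1 + u)) ^ 2) := by
  have : (1 : ℝ) - u ≠ 0 := by linarith
  simp only [mehlerDensity, div_pow, ← exp_nat_mul, div_mul_eq_mul_div, ← exp_add,
    sq_sqrt (by linarith : 0 ≤ 1 - u)]
  congr 2
  field_simp
  push_cast
  linear_combination 2 * (1 - u) * x ^ 2 * sq_sqrt hu0

theorem integrable_mehlerDensity_sq_mul (hu0 : 0 ≤ u) (hu1 : u < 1) :
    Integrable fun z => mehlerDensity u x z ^ 2 * exp (-z ^ 2 / 2) := by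
  have ha : 0 < (1 + u) / (2 * (1 - u)) := by
    have : 0 < 1 - u := by linarith
    positivity
  simp_rw [mehlerDensity_sq_mul_exp x hu0 hu1]
  exact ((integrable_exp_neg_mul_sq ha).comp_sub_right _).const_mul _

theorem integral_mehlerDensity_sq_mul (hu0 : 0 ≤ u) (hu1 : u < 1) :
    ∫ z, mehlerDensity u x z ^ 2 * exp (-z ^ 2 / 2)
      = √(2 * π) * (exp (u * x ^ 2 / (1 + u)) / √(1 - u ^ 2)) := by
  have h1u : 0 < 1 - u := by linarith
  have hpos : 0 < √(1 - u ^ 2) := sqrt_pos.2 (by nlinarith)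
  have hsq : π / ((1 + u) / (2 * (1 - u))) * (1 - u ^ 2) = 2 * π * (1 - u) ^ 2 := by
    field_simp
    ring
  have hsqrt : √(π / ((1 + u) / (2 * (1 - u)))) = √(2 * π) * (1 - u) / √(1 - u ^ 2) := by
    rw [eq_div_iff hpos.ne', ← sqrt_mul (by positivity), hsq, sqrt_mul (by positivity),
      sqrt_sq h1u.le]
  simp_rw [mehlerDensity_sq_mul_exp x hu0 hu1]
  rw [integral_const_mul, integral_exp_neg_mul_sub_sq, hsqrt]
  field_simp

end MehlerDensity

theorem sum_range_pow_mul_He_sq_div_factorial_le (N : ℕ) (x : ℝ) {u : ℝ} (hu0 : 0 < u)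
    (hu1 : u < 1) :
    ∑ n ∈ Finset.range N, u ^ n * He n x ^ 2 / n ! ≤ exp (u * x ^ 2 / (1 + u)) / √(1 - u ^ 2) := by
  have hbessel := sum_sq_integral_mul_hePoly_le (integrable_mehlerDensity_sq_mul x hu0.le hu1)
    (integrable_mehlerDensity_mul_eval x hu1) N
  have hterm (n : ℕ) : (√u ^ n * He n x * √(2 * π)) ^ 2 / (n ! * √(2 * π))
      = √(2 * π) * (u ^ n * He n x ^ 2 / n !) := by
    rw [mul_pow, mul_pow, ← pow_mul, mul_comm n, pow_mul, sq_sqrt hu0.le]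
    field_simp
  simp_rw [integral_mehlerDensity_mul_hePoly x hu0.le hu1,
    integral_mehlerDensity_sq_mul x hu0.le hu1, hterm, ← Finset.mul_sum] at hbessel
  exact le_of_mul_le_mul_left hbessel (by positivity)

theorem sq_sum_mul_le_sum_sq_of_sum_sq_le_one {ι : Type*} (s : Finset ι) {c : ι → ℝ} (t : ι → ℝ)
    (hc : ∑ i ∈ s, c i ^ 2 ≤ 1) : (∑ i ∈ s, c i * t i) ^ 2 ≤ ∑ i ∈ s, t i ^ 2 :=
  (Finset.sum_mul_sq_le_sq_mul_sq s c t).trans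
    (mul_le_of_le_one_left (Finset.sum_nonneg fun i _ => sq_nonneg (t i)) hc)

theorem sq_prod_div_factorial_sum_le {ι : Type*} [Fintype ι] (a : ι → ℕ) (g : ι → ℝ) {u : ℝ}
    (hu : 0 < u) :
    (∏ i, g i) ^ 2 / (∑ i, a i)! ≤ (u ^ ∑ i, a i)⁻¹ * ∏ i, u ^ a i * g i ^ 2 / (a i)! := by
  have hfac : ((∏ i, (a i)! : ℕ) : ℝ) ≤ (∑ i, a i)! := by
    exact_mod_cast Nat.le_of_dvd (Nat.factorial_pos _) (Nat.prod_factorial_dvd_factorial_sum _ _)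
  rw [Finset.prod_div_distrib, Finset.prod_mul_distrib, Finset.prod_pow_eq_pow_sum, ← mul_div_assoc,
    ← mul_assoc, inv_mul_cancel₀ (by positivity), one_mul, Finset.prod_pow]
  push_cast at hfac
  gcongr

theorem sum_antidiagonalTuple_prod_le_prod_sum {m : ℕ} (l : ℕ) {g : Fin m → ℕ → ℝ}
    (hg : ∀ i n, 0 ≤ g i n) :
    ∑ a ∈ Finset.Nat.antidiagonalTuple m l, ∏ i, g i (a i)
      ≤ ∏ i, ∑ n ∈ Finset.range (l + 1), g i n := by
  rw [Finset.prod_univ_sum]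
  refine Finset.sum_le_sum_of_subset_of_nonneg (fun a ha => ?_)
    fun a _ _ => Finset.prod_nonneg fun i _ => hg i (a i)
  rw [Fintype.mem_piFinset]
  intro i
  rw [Finset.mem_range, Nat.lt_succ_iff, ← Finset.Nat.mem_antidiagonalTuple.1 ha]
  exact Finset.single_le_sum (fun j _ => Nat.zero_le (a j)) (Finset.mem_univ i)

theorem prod_exp_div_sqrt {ι : Type*} [Fintype ι] (f : ι → ℝ) {b : ℝ} (hb : 0 ≤ b) :
    ∏ i, exp (f i) / √b = b ^ (-(Fintype.card ι : ℝ) / 2) * exp (∑ i, f i) := by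
  rw [Finset.prod_div_distrib, ← exp_sum, Finset.prod_const, Finset.card_univ, sqrt_eq_rpow,
    ← rpow_natCast, ← rpow_mul hb, div_eq_inv_mul, ← rpow_neg hb, mul_comm]
  ring_nf

theorem stmt9_general (m l : ℕ) (c : (Fin m → ℕ) → ℝ)
    (hc : ∑ a ∈ Finset.Nat.antidiagonalTuple m l, (c a) ^ 2 ≤ 1)
    (y : Fin m → ℝ) (u : ℝ) (hu0 : 0 < u) (hu1 : u < 1) :
    (∑ a ∈ Finset.Nat.antidiagonalTuple m l,
        c a * (∏ i, He (a i) (y i)) / Real.sqrt (l.factorial : ℝ)) ^ 2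
      ≤ (u ^ l)⁻¹ * (1 - u ^ 2) ^ (-(m : ℝ) / 2)
          * Real.exp (u * (∑ i, (y i) ^ 2) / (1 + u)) := by
  set T := Finset.Nat.antidiagonalTuple m l
  calc (∑ a ∈ T, c a * (∏ i, He (a i) (y i)) / √(l ! : ℝ)) ^ 2
      = (∑ a ∈ T, c a * ((∏ i, He (a i) (y i)) / √(l ! : ℝ))) ^ 2 := by simp only [mul_div_assoc]
    _ ≤ ∑ a ∈ T, ((∏ i, He (a i) (y i)) / √(l ! : ℝ)) ^ 2 :=
        sq_sum_mul_le_sum_sq_of_sum_sq_le_one T _ hc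
    _ ≤ ∑ a ∈ T, (u ^ l)⁻¹ * ∏ i, u ^ a i * He (a i) (y i) ^ 2 / (a i)! := by
        refine Finset.sum_le_sum fun a ha => ?_
        rw [div_pow, sq_sqrt (by positivity), ← Finset.Nat.mem_antidiagonalTuple.1 ha]
        exact sq_prod_div_factorial_sum_le a _ hu0
    _ = (u ^ l)⁻¹ * ∑ a ∈ T, ∏ i, u ^ a i * He (a i) (y i) ^ 2 / (a i)! := by rw [Finset.mul_sum]
    _ ≤ (u ^ l)⁻¹ * ∏ i, ∑ n ∈ Finset.range (l + 1), u ^ n * He n (y i) ^ 2 / n ! := by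
        gcongr
        exact sum_antidiagonalTuple_prod_le_prod_sum l
          (g := fun i n => u ^ n * He n (y i) ^ 2 / n !) fun i n => by positivity
    _ ≤ (u ^ l)⁻¹ * ∏ i, exp (u * y i ^ 2 / (1 + u)) / √(1 - u ^ 2) := by
        gcongr with i
        exact sum_range_pow_mul_He_sq_div_factorial_le _ _ hu0 hu1
    _ = _ := by
        rw [prod_exp_div_sqrt _ (by nlinarith), Fintype.card_fin, ← Finset.sum_div,
          ← Finset.mul_sum, mul_assoc]

/-- pointwise bound on a unit-coefficient degree-`l` harmonic polynomial. -/
theorem stmt9 (m l : ℕ) (hm : 1 ≤ m) (c : (Fin m → ℕ) → ℝ)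
    (hc : ∑ a ∈ Finset.Nat.antidiagonalTuple m l, (c a) ^ 2 ≤ 1)
    (y : Fin m → ℝ) (u : ℝ) (hu0 : 0 < u) (hu1 : u < 1) :
    (∑ a ∈ Finset.Nat.antidiagonalTuple m l,
        c a * (∏ i, He (a i) (y i)) / Real.sqrt (l.factorial : ℝ)) ^ 2
      ≤ (u ^ l)⁻¹ * (1 - u ^ 2) ^ (-(m : ℝ) / 2)
          * Real.exp (u * (∑ i, (y i) ^ 2) / (1 + u)) :=
  stmt9_general m l c hc y u hu0 hu1
end

section
/- For every universal constant C > 0 large enough there is a constant C' > 0 such that the following holds. Let α ∈ (0,1/2], l ∈ {1,2}, k ≥ 1, γ ≥ 1, set R = (C·log(1/α))^{l/2} and L = C·R·log(2 + log(1/α)); let T be a finite multiset and p a real-valued function on T such that max_{x,y∈T} |p(x) − p(y)| ≤ (C·(1 + k²γ/l))^{l/2}, and suppose some interval [a, b] of length at most L contains at least a (1 − α/2)-fraction of the multiset {p(x) : x ∈ T}. If for every t > 2R the fraction of x ∈ T with min{|p(x) − a|, |p(x) − b|} ≥ t is at most (32/α)·exp(−(t − 2R)^{2/l}) + 2α²/(k²γ)²,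 then the empirical variance satisfies Var[p(T)] ≤ C'·(log(1/α))^l·log²(2 + log(1/α)). -/
open MeasureTheory ProbabilityTheory Finset
open scoped Classical BigOperators

/-- The `d`-dimensional Gaussian `N(μ, I_d)` as a product of 1-D Gaussians. -/
noncomputable def gaussianPi (d : ℕ) (μ : Fin d → ℝ) : Measure (Fin d → ℝ) :=
  Measure.pi fun i => gaussianReal (μ i) 1

instance gaussianPi.instIsProbabilityMeasure (d : ℕ) (μ : Fin d → ℝ) :
    IsProbabilityMeasure (gaussianPi d μ) := by
  unfold gaussianPi; infer_instance

/-- Euclidean (ℓ²) norm on `Fin d → ℝ`. -/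
noncomputable def l2norm {d : ℕ} (x : Fin d → ℝ) : ℝ := Real.sqrt (∑ i, (x i) ^ 2)

/-- Number of nonzero coordinates (the "ℓ⁰ norm"). -/
noncomputable def supp0 {d : ℕ} (v : Fin d → ℝ) : ℕ :=
  (Finset.univ.filter fun i => v i ≠ 0).card

/-- A `k²`-sparse polynomial of degree `l`: either a linear form with a `k²`-sparse
coefficient vector (`l = 1`), or a degree-2 harmonic polynomial
`(xᵀAx − tr A)/√2` for a symmetric `A` with at most `k²` nonzero entries (`l = 2`). -/
def IsSparsePoly (d k l : ℕ) (p : (Fin d → ℝ) → ℝ) : Prop :=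
  (l = 1 ∧ ∃ v : Fin d → ℝ, supp0 v ≤ k ^ 2 ∧ ∀ x, p x = ∑ i, v i * x i) ∨
  (l = 2 ∧ ∃ A : Matrix (Fin d) (Fin d) ℝ, A.IsSymm ∧
    ((Finset.univ : Finset (Fin d × Fin d)).filter (fun ij => A ij.1 ij.2 ≠ 0)).card ≤ k ^ 2 ∧
    ∀ x, p x = ((∑ i, ∑ j, x i * A i j * x j) - ∑ i, A i i) / Real.sqrt 2)

noncomputable def repBound (d k : ℕ) (α τ : ℝ) : ℝ :=
  α ^ 3 / (100 * (k : ℝ) ^ 4 * (Real.log ((d * k / α) * Real.log (1 / τ))) ^ 2)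

/-- `S` is representative w.r.t. `G ~ N(μ, I_d)`. -/
def Representative (d k : ℕ) (α τ : ℝ) (μ : Fin d → ℝ) (S : Finset (Fin d → ℝ)) : Prop :=
  ∀ (l : ℕ) (p : (Fin d → ℝ) → ℝ), IsSparsePoly d k l p →
    |((gaussianPi d μ) {x | 0 ≤ p x}).toReal - (S.filter fun x => 0 ≤ p x).card / S.card|
      ≤ repBound d k α τ

/-- `T` is α-good, witnessed by the representative set `S` and ℓ∞-diameter constant `C₀`. -/
def AlphaGoodWith (d k : ℕ) (α τ C₀ : ℝ) (μ : Fin d → ℝ) (S : Finset (Fin d → ℝ))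
    (T : Multiset (Fin d → ℝ)) : Prop :=
  Representative d k α τ μ S ∧
  ((Multiset.card (T.filter fun x => x ∈ S) : ℝ) ≥
    max ((1 - α / 6) * S.card) (α * Multiset.card T)) ∧
  ∀ x ∈ T, ∀ y ∈ T, ‖x - y‖ ≤ C₀ * Real.sqrt (Real.log (d * S.card / α))

def AlphaGood (d k : ℕ) (α τ C₀ : ℝ) (μ : Fin d → ℝ) (T : Multiset (Fin d → ℝ)) : Prop :=
  ∃ S, AlphaGoodWith d k α τ C₀ μ S T

/-- Mean of `p(G)` for `G ~ N(μ, I_d)`. -/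
noncomputable def gMean (d : ℕ) (μ : Fin d → ℝ) (p : (Fin d → ℝ) → ℝ) : ℝ :=
  ∫ x, p x ∂(gaussianPi d μ)

/-- Variance of `p(G)` for `G ~ N(μ, I_d)`. -/
noncomputable def gVar (d : ℕ) (μ : Fin d → ℝ) (p : (Fin d → ℝ) → ℝ) : ℝ :=
  ∫ x, (p x - gMean d μ p) ^ 2 ∂(gaussianPi d μ)

/-- Mean of `p(x)` for `x` uniform on the multiset `T`. -/
noncomputable def mMean {X : Type*} (T : Multiset X) (p : X → ℝ) : ℝ :=
  (T.map p).sum / Multiset.card T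

/-- Variance of `p(x)` for `x` uniform on the multiset `T`. -/
noncomputable def mVar {X : Type*} (T : Multiset X) (p : X → ℝ) : ℝ :=
  (T.map fun x => (p x - mMean T p) ^ 2).sum / Multiset.card T

/-- Empirical mean of the multiset `T`. -/
noncomputable def empMean {d : ℕ} (T : Multiset (Fin d → ℝ)) : Fin d → ℝ :=
  fun i => (T.map fun x => x i).sum / Multiset.card T

/-- Empirical covariance of the multiset `T`. -/
noncomputable def empCov {d : ℕ} (T : Multiset (Fin d → ℝ)) : Fin d → Fin d → ℝ :=
  fun i j => (T.map fun x => (x i - empMean T i) * (x j - empMean T j)).sum / Multiset.card T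


section AuxLemmas

private lemma ms_sum_le {X : Type*} (T : Multiset X) (f g : X → ℝ) (h : ∀ x ∈ T, f x ≤ g x) :
    (T.map f).sum ≤ (T.map g).sum := by
  induction T using Multiset.induction_on with
  | empty => simp
  | cons a s ih =>
    simp only [Multiset.map_cons, Multiset.sum_cons]
    exact add_le_add (h a (Multiset.mem_cons_self a s))
      (ih fun x hx => h x (Multiset.mem_cons_of_mem hx))

private lemma ms_sum_ite {X : Type*} (T : Multiset X) (P : X → Prop) (c : ℝ) :
    (T.map fun x => if P x then c else 0).sum = c * (Multiset.card (T.filter P)) := by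
  induction T using Multiset.induction_on with
  | empty => simp
  | cons a s ih =>
    simp only [Multiset.map_cons, Multiset.sum_cons, ih, Multiset.filter_cons]
    by_cases h : P a
    · simp [h]; ring
    · simp [h]

private lemma ms_sum_finsum {X : Type*} (T : Multiset X) (s : Finset ℕ) (f : ℕ → X → ℝ) :
    (T.map fun x => ∑ j ∈ s, f j x).sum = ∑ j ∈ s, (T.map fun x => f j x).sum := by
  induction T using Multiset.induction_on with
  | empty => simp
  | cons a t ih =>
    simp only [Multiset.map_cons, Multiset.sum_cons, ih, Finset.sum_add_distrib]

private lemma ms_sum_add {X : Type*} (T : Multiset X) (f g : X → ℝ) :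
    (T.map fun x => f x + g x).sum = (T.map f).sum + (T.map g).sum := by
  induction T using Multiset.induction_on with
  | empty => simp
  | cons a t ih => simp only [Multiset.map_cons, Multiset.sum_cons, ih]; ring

private lemma ms_sum_const {X : Type*} (T : Multiset X) (c : ℝ) :
    (T.map fun _ => c).sum = (Multiset.card T) * c := by
  induction T using Multiset.induction_on with
  | empty => simp
  | cons a t ih =>
    simp only [Multiset.map_cons, Multiset.sum_cons, ih, Multiset.card_cons]
    push_cast; ring

private lemma ms_sum_smul {X : Type*} (T : Multiset X) (f : X → ℝ) (c : ℝ) :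
    (T.map fun x => c * f x).sum = c * (T.map f).sum := by
  induction T using Multiset.induction_on with
  | empty => simp
  | cons a t ih => simp only [Multiset.map_cons, Multiset.sum_cons, ih]; ring

private lemma mvar_le_moment {X : Type*} (T : Multiset X) (p : X → ℝ) (c : ℝ) :
    mVar T p ≤ (T.map fun x => (p x - c)^2).sum / (Multiset.card T) := by
  rcases eq_or_ne (Multiset.card T) 0 with h0 | h0
  · simp [mVar, h0]
  have hn : (0:ℝ) < (Multiset.card T : ℝ) := by positivity
  set m := mMean T p with hm
  have key : (T.map fun x => (p x - c)^2).sum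
      = (T.map fun x => (p x - m)^2).sum + (Multiset.card T) * (m - c)^2 := by
    have h1 : ∀ x : X, (p x - c)^2
        = (p x - m)^2 + ((2*(m-c)) * p x + ((m-c)^2 - 2*(m-c)*m)) := by
      intro x; ring
    have h2 : (T.map fun x => (p x - c)^2).sum
        = (T.map fun x => (p x - m)^2).sum + ((2*(m-c)) * (T.map p).sum
          + (Multiset.card T) * ((m-c)^2 - 2*(m-c)*m)) := by
      rw [show (fun x => (p x - c)^2)
          = fun x => (p x - m)^2 + ((2*(m-c)) * p x + ((m-c)^2 - 2*(m-c)*m)) from funext h1,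
        ms_sum_add, ms_sum_add, ms_sum_smul, ms_sum_const]
    rw [h2]
    have hsum : (T.map p).sum = (Multiset.card T) * m := by
      rw [hm, mMean]; field_simp
    rw [hsum]; ring
  rw [mVar, key, ← hm]
  have h3 : (0:ℝ) ≤ (Multiset.card T) * (m - c)^2 := by positivity
  rw [add_div]
  nlinarith [div_nonneg h3 hn.le]

private lemma shell_pointwise (t : ℕ → ℝ) (J : ℕ) (q M : ℝ)
    (hq0 : 0 ≤ q) (hqM : q ≤ M) (ht01 : t 0 ≤ t 1) :
    q^2 ≤ (t 1)^2 + ((∑ j ∈ Finset.Ico 1 J, if t j ≤ q then (t (j+1))^2 else 0)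
      + (if t J ≤ q then M^2 else 0)) := by
  have hmid : (0:ℝ) ≤ ∑ j ∈ Finset.Ico 1 J, if t j ≤ q then (t (j+1))^2 else 0 :=
    Finset.sum_nonneg fun j _ => by positivity
  have hlast : (0:ℝ) ≤ if t J ≤ q then M^2 else 0 := by positivity
  rcases lt_or_ge q (t 1) with h1 | h1
  · nlinarith [sq_nonneg (t 1), sq_nonneg q, pow_le_pow_left₀ hq0 h1.le 2]
  rcases le_or_gt (t J) q with hJ | hJ
  · have hq2 : q^2 ≤ M^2 := pow_le_pow_left₀ hq0 hqM 2
    simp only [if_pos hJ]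
    nlinarith [sq_nonneg (t 1)]
  have hJ2 : 2 ≤ J := by
    by_contra h
    interval_cases J
    · exact absurd (lt_of_le_of_lt (ht01.trans h1) hJ) (lt_irrefl _)
    · exact absurd (h1.trans_lt hJ) (lt_irrefl _)
  set P : ℕ → Prop := fun i => t i ≤ q with hP
  set j := Nat.findGreatest P (J-1) with hj
  have h1J : 1 ≤ J - 1 := by omega
  have hj1 : 1 ≤ j := Nat.le_findGreatest h1J h1
  have hjle : j ≤ J - 1 := Nat.findGreatest_le _
  have hPj : P j := Nat.findGreatest_spec h1J h1
  have hnext : q < t (j+1) := by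
    rcases le_or_gt (j+1) (J-1) with hle | hgt
    · have := Nat.findGreatest_is_greatest (P := P) (n := J-1) (by omega : j < j+1) hle
      exact lt_of_not_ge this
    · have hJj : j + 1 = J := by omega
      rw [hJj]; exact hJ
  have hterm : q^2 ≤ ∑ i ∈ Finset.Ico 1 J, if t i ≤ q then (t (i+1))^2 else 0 := by
    have hmem : j ∈ Finset.Ico 1 J := by
      rw [Finset.mem_Ico]; omega
    have hsingle := Finset.single_le_sum
      (f := fun i => if t i ≤ q then (t (i+1))^2 else 0)
      (fun i _ => by positivity) hmem
    have hone : q^2 ≤ (if t j ≤ q then (t (j+1))^2 else 0) := by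
      rw [if_pos hPj]
      exact pow_le_pow_left₀ hq0 hnext.le 2
    linarith
  nlinarith [sq_nonneg (t 1)]

private lemma gsum2 (n : ℕ) : ∑ i ∈ Finset.range n, ((1:ℝ)/2)^i ≤ 2 := by
  rw [geom_sum_eq (by norm_num)]
  have h : (0:ℝ) < (1/2:ℝ)^n := by positivity
  rw [div_le_iff_of_neg (by norm_num)]
  linarith

private lemma sq_le_four_pow (j : ℕ) (hj : 1 ≤ j) : ((j:ℝ)+1)^2 ≤ 4^j := by
  induction j with
  | zero => omega
  | succ n ih =>
    rcases Nat.eq_zero_or_pos n with rfl | hn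
    · norm_num
    · have h1 := ih hn
      have h4 : (0:ℝ) < 4^n := by positivity
      push_cast at h1 ⊢
      have hn' : (1:ℝ) ≤ n := by exact_mod_cast hn
      have e : (4:ℝ)^(n+1) = 4*4^n := by ring
      rw [e]
      nlinarith

private lemma log_cube_le (u : ℝ) (hu : 1 ≤ u) : (Real.log u)^3 ≤ 27 * u := by
  have h3 : Real.log u = 3 * Real.log (u ^ ((1:ℝ)/3)) := by
    rw [Real.log_rpow (by linarith)]; ring
  have hpos : (0:ℝ) < u ^ ((1:ℝ)/3) := Real.rpow_pos_of_pos (by linarith) _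
  have hle : Real.log (u ^ ((1:ℝ)/3)) ≤ u ^ ((1:ℝ)/3) :=
    (Real.log_le_sub_one_of_pos hpos).trans (by linarith)
  have hlog0 : 0 ≤ Real.log (u ^ ((1:ℝ)/3)) := by
    rw [Real.log_nonneg_iff hpos]
    exact Real.one_le_rpow hu (by norm_num)
  have hcube : (u ^ ((1:ℝ)/3))^3 = u := by
    rw [← Real.rpow_natCast (u ^ ((1:ℝ)/3)) 3, ← Real.rpow_mul (by linarith)]
    norm_num
  calc (Real.log u)^3 = 27 * (Real.log (u ^ ((1:ℝ)/3)))^3 := by rw [h3]; ring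
    _ ≤ 27 * (u ^ ((1:ℝ)/3))^3 := by nlinarith [pow_le_pow_left₀ hlog0 hle 3]
    _ = 27 * u := by rw [hcube]

private lemma cube_sum_le (x y z : ℝ) (hx : 0 ≤ x) (hy : 0 ≤ y) (hz : 0 ≤ z) :
    (x + y + z)^3 ≤ 27 * (x^3 + y^3 + z^3) := by
  nlinarith [sq_nonneg (x-y), sq_nonneg (y-z), sq_nonneg (x-z), mul_nonneg hx hy,
    mul_nonneg hy hz, mul_nonneg hx hz, mul_nonneg (mul_nonneg hx hy) hz]

private lemma rpow_half_sq (z : ℝ) (hz : 0 ≤ z) (l : ℕ) : (z ^ ((l:ℝ)/2))^2 = z^l := by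
  rw [← Real.rpow_natCast (z ^ ((l:ℝ)/2)) 2, ← Real.rpow_mul hz]
  norm_num

private lemma ms_total {X : Type*} (T : Multiset X) (q : X → ℝ) (t : ℕ → ℝ) (J : ℕ) (c M : ℝ) :
    (T.map fun x => c + (2*(∑ j ∈ Finset.Ico 1 J, if t j ≤ q x then (t (j+1))^2 else 0)
      + 2*(if t J ≤ q x then M^2 else 0))).sum
    = (Multiset.card T)*c
      + (2*(∑ j ∈ Finset.Ico 1 J,
            (t (j+1))^2 * (Multiset.card (T.filter fun x => t j ≤ q x)))
        + 2*(M^2 * (Multiset.card (T.filter fun x => t J ≤ q x)))) := by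
  rw [ms_sum_add, ms_sum_add, ms_sum_const, ms_sum_smul, ms_sum_smul, ms_sum_finsum]
  congr 2
  · congr 1
    refine Finset.sum_congr rfl fun j _ => ?_
    exact ms_sum_ite T (fun x => t j ≤ q x) ((t (j+1))^2)
  · congr 1
    exact ms_sum_ite T (fun x => t J ≤ q x) (M^2)

end AuxLemmas

set_option maxHeartbeats 0 in
/-- if no filtering threshold exists, the empirical variance is small. -/
theorem stmt15 :
    ∃ C₀ : ℝ, 0 < C₀ ∧ ∀ C : ℝ, C₀ ≤ C → ∃ C' : ℝ, 0 < C' ∧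
      ∀ (X : Type) (T : Multiset X) (p : X → ℝ) (α γ : ℝ) (k l : ℕ),
        0 < α → α ≤ 1/2 → (l = 1 ∨ l = 2) → 1 ≤ k → 1 ≤ γ →
        (∀ x ∈ T, ∀ y ∈ T,
          |p x - p y| ≤ (C * (1 + (k : ℝ) ^ 2 * γ / l)) ^ ((l : ℝ) / 2)) →
        ∀ a b : ℝ, a ≤ b →
          b - a ≤ C * ((C * Real.log (1/α)) ^ ((l : ℝ) / 2)) * Real.log (2 + Real.log (1/α)) →
          ((Multiset.card (T.filter fun x => p x ∈ Set.Icc a b) : ℝ)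
            ≥ (1 - α / 2) * Multiset.card T) →
          (∀ t : ℝ, 2 * (C * Real.log (1/α)) ^ ((l : ℝ) / 2) < t →
            ((Multiset.card (T.filter fun x => min |p x - a| |p x - b| ≥ t) : ℝ) ≤
              ((32 / α) *
                  Real.exp (-((t - 2 * (C * Real.log (1/α)) ^ ((l : ℝ) / 2)) ^ ((2 : ℝ) / l)))
                + 2 * α ^ 2 / ((k : ℝ) ^ 2 * γ) ^ 2) * Multiset.card T)) →
          mVar T p ≤ C' * (Real.log (1/α)) ^ (l : ℝ) * (Real.log (2 + Real.log (1/α))) ^ 2 := by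
  refine ⟨1, one_pos, fun C hC => ?_⟩
  have hCpos : (0:ℝ) < C := lt_of_lt_of_le one_pos hC
  refine ⟨10^9 * C^12, by positivity, ?_⟩
  intro X T p α γ k l hα hα2 hl hk hγ hdiam a b hab hWle hmass hthr
  simp only [ge_iff_le] at hmass hthr
  -- basic abbreviations
  set Lg := Real.log (1/α) with hLgdef
  set LL := Real.log (2 + Lg) with hLLdef
  have hα1 : (2:ℝ) ≤ 1/α := by rw [le_div_iff₀ hα]; linarith
  have hlog2 : (0.693:ℝ) < Real.log 2 := by
    have := Real.log_two_gt_d9; linarith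
  have hLg2 : Real.log 2 ≤ Lg := Real.log_le_log (by norm_num) hα1
  have hLgpos : (0:ℝ) < Lg := by linarith
  have hLL2 : Real.log 2 ≤ LL := Real.log_le_log (by norm_num) (by linarith)
  have hLLpos : (0:ℝ) < LL := by linarith
  have hl1 : 1 ≤ l := by rcases hl with rfl|rfl <;> norm_num
  have hl2 : l ≤ 2 := by rcases hl with rfl|rfl <;> norm_num
  have hlR : (1:ℝ) ≤ (l:ℝ) := by exact_mod_cast hl1
  have hl0 : (l:ℝ) ≠ 0 := by linarith
  -- convert rpow target to nat pow
  rw [Real.rpow_natCast]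
  rcases Nat.eq_zero_or_pos (Multiset.card T) with h0 | h0
  · rw [Multiset.card_eq_zero] at h0
    subst h0
    simp only [mVar, Multiset.map_zero, Multiset.sum_zero, Multiset.card_zero,
      Nat.cast_zero, div_zero]
    have h1 : (0:ℝ) ≤ Lg ^ l := by positivity
    have h2 : (0:ℝ) ≤ LL ^ 2 := by positivity
    positivity
  have hn : (0:ℝ) < (Multiset.card T : ℝ) := by exact_mod_cast h0
  set n := (Multiset.card T : ℝ) with hndef
  set u := (k:ℝ)^2 * γ with hudef
  have hk1 : (1:ℝ) ≤ (k:ℝ) := by exact_mod_cast hk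
  have hu1 : (1:ℝ) ≤ u := by nlinarith
  have hupos : (0:ℝ) < u := by linarith
  set R := (C * Lg) ^ ((l:ℝ)/2) with hRdef
  have hRpos : (0:ℝ) < R := Real.rpow_pos_of_pos (by positivity) _
  set D := (C * (1 + u / l)) ^ ((l:ℝ)/2) with hDdef
  have hDpos : (0:ℝ) < D := Real.rpow_pos_of_pos (by positivity) _
  set W := b - a with hWdef
  have hW0 : (0:ℝ) ≤ W := by simp [hWdef]; linarith
  set M := D + W with hMdef
  have hM0 : (0:ℝ) ≤ M := by positivity
  set E := 2 * α^2 / u^2 with hEdef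
  have hE0 : (0:ℝ) ≤ E := by positivity
  have hu2 : (1:ℝ) ≤ u^2 := by nlinarith
  have hE12 : E ≤ 1/2 := by
    rw [hEdef, div_le_iff₀ (by positivity)]; nlinarith
  set g := Real.log (32 / α^4) with hgdef
  have hgeq : g = Real.log 32 + 4 * Lg := by
    rw [hgdef, Real.log_div (by norm_num) (by positivity), Real.log_pow, hLgdef,
      one_div, Real.log_inv]
    push_cast; ring
  have hlog32 : Real.log 32 = 5 * Real.log 2 := by
    rw [show (32:ℝ) = 2^5 by norm_num, Real.log_pow]; push_cast; ring
  have hg1 : (1:ℝ) ≤ g := by rw [hgeq, hlog32]; nlinarith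
  have hg9 : g ≤ 9 * Lg := by rw [hgeq, hlog32]; nlinarith
  set G := Real.log (32 * (1 + M^2) / α) with hGdef
  have hGpos : (0:ℝ) ≤ G := by
    apply Real.log_nonneg
    rw [le_div_iff₀ hα]
    nlinarith
  set t : ℕ → ℝ := fun j => 2*R + ((j:ℝ) * g) ^ ((l:ℝ)/2) with htdef
  set J := ⌈G / g⌉₊ with hJdef
  have hgpos : (0:ℝ) < g := by linarith
  have hJg : G ≤ (J:ℝ) * g := by
    have h1 : G / g ≤ (J:ℝ) := Nat.le_ceil _
    rw [div_le_iff₀ hgpos] at h1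
    exact h1
  have hJle : (J:ℝ) ≤ G/g + 1 := by
    have := Nat.ceil_lt_add_one (by positivity : (0:ℝ) ≤ G / g)
    rw [hJdef]; push_cast; linarith
  -- a point of T inside [a,b]
  have hy₀ : ∃ y, y ∈ T ∧ a ≤ p y ∧ p y ≤ b := by
    have hpos : 0 < Multiset.card (T.filter fun x => p x ∈ Set.Icc a b) := by
      by_contra h
      push_neg at h
      interval_cases h' : Multiset.card (T.filter fun x => p x ∈ Set.Icc a b)
      push_cast at hmass
      have h34 : (3/4:ℝ) ≤ 1 - α/2 := by linarith
      have h1 : (3/4:ℝ)*n ≤ (1-α/2)*n := mul_le_mul_of_nonneg_right h34 hn.le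
      have h2 : (0:ℝ) < (3/4)*n := by linarith
      linarith
    obtain ⟨y, hy⟩ := Multiset.card_pos_iff_exists_mem.mp hpos
    rw [Multiset.mem_filter] at hy
    exact ⟨y, hy.1, hy.2.1, hy.2.2⟩
  obtain ⟨y₀, hy₀T, hy₀a, hy₀b⟩ := hy₀
  have hqM : ∀ x ∈ T, min |p x - a| |p x - b| ≤ M := by
    intro x hx
    have h1 : |p x - a| ≤ |p x - p y₀| + |p y₀ - a| := abs_sub_le _ _ _
    have h2 : |p x - p y₀| ≤ D := hdiam x hx y₀ hy₀T
    have h3 : |p y₀ - a| = p y₀ - a := abs_of_nonneg (by linarith)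
    have h4 : |p x - a| ≤ M := by rw [hMdef, hWdef]; rw [h3] at h1; linarith
    exact le_trans (min_le_left _ _) h4
  have hq0 : ∀ x, (0:ℝ) ≤ min |p x - a| |p x - b| :=
    fun x => le_min (abs_nonneg _) (abs_nonneg _)
  -- threshold facts
  have htnn : ∀ j : ℕ, (0:ℝ) ≤ ((j:ℝ) * g) ^ ((l:ℝ)/2) :=
    fun j => Real.rpow_nonneg (by positivity) _
  have ht01 : t 0 ≤ t 1 := by
    simp only [htdef]
    have := htnn 1
    push_cast
    rw [zero_mul, Real.zero_rpow (by positivity)]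
    linarith
  have ht2R : ∀ j : ℕ, 1 ≤ j → 2*R < t j := by
    intro j hj
    have hjpos : (0:ℝ) < (j:ℝ) := by exact_mod_cast hj
    have : (0:ℝ) < ((j:ℝ) * g) ^ ((l:ℝ)/2) := Real.rpow_pos_of_pos (by positivity) _
    simp only [htdef]; linarith
  have hexp : ∀ j : ℕ, 1 ≤ j → (t j - 2*R) ^ ((2:ℝ)/(l:ℝ)) = (j:ℝ) * g := by
    intro j hj
    have hjpos : (0:ℝ) < (j:ℝ) := by exact_mod_cast hj
    have hjg : (0:ℝ) ≤ (j:ℝ) * g := by positivity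
    have h1 : t j - 2*R = ((j:ℝ) * g) ^ ((l:ℝ)/2) := by simp only [htdef]; ring
    rw [h1, ← Real.rpow_mul hjg]
    have : (l:ℝ)/2 * (2/(l:ℝ)) = 1 := by field_simp
    rw [this, Real.rpow_one]
  have hcnt : ∀ j : ℕ, 1 ≤ j →
      (Multiset.card (T.filter fun x => t j ≤ min |p x - a| |p x - b|) : ℝ)
        ≤ ((32/α) * Real.exp (-((j:ℝ) * g)) + E) * n := by
    intro j hj
    have h := hthr (t j) (ht2R j hj)
    rw [hexp j hj] at h
    exact h
  have hGpos2 : (0:ℝ) < G := by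
    rw [hGdef]; apply Real.log_pos
    rw [lt_div_iff₀ hα]; nlinarith only [sq_nonneg M, hα2, hα]
  have hJ1 : 1 ≤ J := by
    rw [hJdef, Nat.one_le_ceil_iff]; positivity
  have hcntJ : (Multiset.card (T.filter fun x => t J ≤ min |p x - a| |p x - b|) : ℝ)
      ≤ (1/(1+M^2) + E) * n := by
    have h := hcnt J hJ1
    have h1 : Real.exp (-((J:ℝ)*g)) ≤ Real.exp (-G) := Real.exp_le_exp.2 (by linarith)
    have h2 : Real.exp (-G) = α/(32*(1+M^2)) := by
      rw [hGdef, Real.exp_neg, Real.exp_log (by positivity)]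
      rw [inv_div]
    have h3 : (32/α) * Real.exp (-((J:ℝ)*g)) ≤ 1/(1+M^2) := by
      rw [h2] at h1
      have heq : (32/α) * (α/(32*(1+M^2))) = 1/(1+M^2) := by
        field_simp
      calc (32/α) * Real.exp (-((J:ℝ)*g)) ≤ (32/α) * (α/(32*(1+M^2))) :=
            mul_le_mul_of_nonneg_left h1 (by positivity)
        _ = 1/(1+M^2) := heq
    calc (Multiset.card (T.filter fun x => t J ≤ min |p x - a| |p x - b|) : ℝ)
        ≤ ((32/α) * Real.exp (-((J:ℝ)*g)) + E) * n := h
      _ ≤ (1/(1+M^2) + E) * n := by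
          apply mul_le_mul_of_nonneg_right _ hn.le
          linarith only [h3]
  -- pointwise bound
  have hkey : ∀ x ∈ T, (p x - a)^2 ≤ (2*W^2 + 2*(t 1)^2)
      + (2*(∑ j ∈ Finset.Ico 1 J, if t j ≤ min |p x - a| |p x - b| then (t (j+1))^2 else 0)
        + 2*(if t J ≤ min |p x - a| |p x - b| then M^2 else 0)) := by
    intro x hx
    have hs := shell_pointwise t J (min |p x - a| |p x - b|) M (hq0 x) (hqM x hx) ht01
    have habs : |p x - a| ≤ W + min |p x - a| |p x - b| := by
      rcases le_total |p x - a| |p x - b| with h|h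
      · rw [min_eq_left h]; linarith only [hW0]
      · rw [min_eq_right h]
        have h5 := abs_sub_le (p x) b a
        have hba : |b - a| = W := by rw [hWdef]; exact abs_of_nonneg (by linarith only [hab])
        linarith only [h5, hba]
    have hsq : (p x - a)^2 ≤ 2*W^2 + 2*(min |p x - a| |p x - b|)^2 := by
      have h1 : (p x - a)^2 ≤ (W + min |p x - a| |p x - b|)^2 := by
        rw [← sq_abs (p x - a)]
        exact pow_le_pow_left₀ (abs_nonneg _) habs 2
      nlinarith only [h1, sq_nonneg (W - min |p x - a| |p x - b|)]
    linarith only [hs, hsq]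
  have hmaster : (T.map fun x => (p x - a)^2).sum
      ≤ n*(2*W^2 + 2*(t 1)^2)
        + (2*(∑ j ∈ Finset.Ico 1 J, (t (j+1))^2
              * (Multiset.card (T.filter fun x => t j ≤ min |p x - a| |p x - b|)))
          + 2*(M^2 * (Multiset.card (T.filter fun x => t J ≤ min |p x - a| |p x - b|)))) := by
    have h1 := ms_sum_le T _ _ hkey
    have h2 := ms_total T (fun x => min |p x - a| |p x - b|) t J (2*W^2 + 2*(t 1)^2) M
    exact h1.trans (le_of_eq h2)
  -- numeric abbreviations (natural powers)
  set Lgl := Lg ^ l with hLgldef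
  set gl := g ^ l with hgldef
  have hLgl0 : (0:ℝ) ≤ Lgl := by positivity
  have hgl0 : (0:ℝ) ≤ gl := by positivity
  have hR2 : R^2 = (C*Lg)^l := rpow_half_sq _ (by positivity) l
  have hR2' : R^2 ≤ C^2 * Lgl := by
    rw [hR2, mul_pow, hLgldef]
    have h1 : C^l ≤ C^2 := pow_le_pow_right₀ hC hl2
    exact mul_le_mul_of_nonneg_right h1 (by positivity)
  have hgl' : gl ≤ 81 * Lgl := by
    rw [hgldef, hLgldef]
    calc g^l ≤ (9*Lg)^l := pow_le_pow_left₀ (by linarith) hg9 l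
      _ = 9^l * Lg^l := mul_pow _ _ _
      _ ≤ 81 * Lg^l := by
          have h9 : (9:ℝ)^l ≤ 81 := by
            rcases hl with rfl|rfl <;> norm_num
          exact mul_le_mul_of_nonneg_right h9 (by positivity)
  have ht1sq : (t 1)^2 ≤ 8*R^2 + 2*gl := by
    have h1 : t 1 = 2*R + ((1:ℝ)*g)^((l:ℝ)/2) := by simp only [htdef, Nat.cast_one]
    have h2 : (((1:ℝ)*g)^((l:ℝ)/2))^2 = g^l := by
      rw [rpow_half_sq _ (by positivity) l, one_mul]
    rw [h1, hgldef]
    nlinarith only [h2, sq_nonneg (2*R - ((1:ℝ)*g)^((l:ℝ)/2)), Real.rpow_nonneg (by positivity : (0:ℝ) ≤ (1:ℝ)*g) ((l:ℝ)/2), hRpos]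
  have hGg1 : (1:ℝ) ≤ G + g := by linarith
  have hJgG : (J:ℝ)*g ≤ G + g := by
    have h1 : ((J:ℝ) - 1) * g ≤ (G/g) * g := by
      apply mul_le_mul_of_nonneg_right _ (by linarith)
      linarith only [hJle]
    rw [div_mul_cancel₀ _ (ne_of_gt hgpos)] at h1
    nlinarith only [h1, hgpos]
  have hα4 : α^2 ≤ 1/4 := by nlinarith only [hα, hα2]
  have hα3 : α^3 ≤ 1/8 := by nlinarith only [hα, hα2, hα4]
  set B := 8*C^2*Lgl + 2*(G+g)^2 with hBdef
  have hB0 : (0:ℝ) ≤ B := by positivity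
  -- per-shell bound
  have hper : ∀ j ∈ Finset.Ico 1 J,
      (t (j+1))^2 * (Multiset.card (T.filter fun x => t j ≤ min |p x - a| |p x - b|) : ℝ)
      ≤ n*(α^3*((1/2:ℝ)^(j-1))*(8*R^2+8*gl)) + n*(E*B) := by
    intro j hjmem
    rw [Finset.mem_Ico] at hjmem
    obtain ⟨m, rfl⟩ : ∃ m, j = m+1 := ⟨j-1, by omega⟩
    have hcj := hcnt (m+1) (by omega)
    have htj2 : (0:ℝ) ≤ (t (m+1+1))^2 := sq_nonneg _
    have hcast : ((m+1+1:ℕ):ℝ) = (m:ℝ)+2 := by push_cast; ring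
    have hts : (t (m+1+1))^2 ≤ 8*R^2 + 2*(((m:ℝ)+2)*g)^l := by
      have h2 : ((((m:ℝ)+2)*g)^((l:ℝ)/2))^2 = (((m:ℝ)+2)*g)^l :=
        rpow_half_sq _ (by positivity) l
      have h3 : t (m+1+1) = 2*R + (((m:ℝ)+2)*g)^((l:ℝ)/2) := by
        simp only [htdef, hcast]
      rw [h3]
      nlinarith only [h2, sq_nonneg (2*R - (((m:ℝ)+2)*g)^((l:ℝ)/2)),
        Real.rpow_nonneg (by positivity : (0:ℝ) ≤ ((m:ℝ)+2)*g) ((l:ℝ)/2), hRpos]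
    have htsA : (t (m+1+1))^2 ≤ 8*R^2 + 2*((m:ℝ)+2)^2*gl := by
      have h1 : (((m:ℝ)+2)*g)^l = ((m:ℝ)+2)^l * g^l := mul_pow _ _ _
      have h2 : ((m:ℝ)+2)^l ≤ ((m:ℝ)+2)^2 :=
        pow_le_pow_right₀ (by linarith [Nat.cast_nonneg (α := ℝ) m]) hl2
      have h3 : (((m:ℝ)+2)*g)^l ≤ ((m:ℝ)+2)^2 * gl := by
        rw [h1, hgldef]
        exact mul_le_mul_of_nonneg_right h2 (by positivity)
      linarith only [hts, h3]
    have htsB : (t (m+1+1))^2 ≤ B := by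
      have h1 : ((m:ℝ)+2)*g ≤ (J:ℝ)*g := by
        have : ((m:ℝ)+2) ≤ (J:ℝ) := by
          have : (m+2:ℕ) ≤ J := by omega
          exact_mod_cast this
        exact mul_le_mul_of_nonneg_right this (by linarith)
      have h2 : (((m:ℝ)+2)*g)^l ≤ (G+g)^l := by
        apply pow_le_pow_left₀ (by positivity)
        linarith only [h1, hJgG]
      have h3 : (G+g)^l ≤ (G+g)^2 := pow_le_pow_right₀ hGg1 hl2
      rw [hBdef]
      have h4 : (0:ℝ) ≤ C^2*Lgl := by positivity
      linarith only [hts, h2, h3, hR2', h4]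
    have hexpj : (32/α) * Real.exp (-(((m+1:ℕ):ℝ)*g)) ≤ α^3 * (1/8:ℝ)^m := by
      have h1 : Real.exp (-(((m+1:ℕ):ℝ)*g)) = (Real.exp (-g))^(m+1) := by
        rw [← Real.exp_nat_mul]
        congr 1
        push_cast; ring
      have h2 : Real.exp (-g) = α^4/32 := by
        rw [hgdef, Real.exp_neg, Real.exp_log (by positivity), inv_div]
      rw [h1, h2]
      have h3 : (32/α)*((α^4/32)^(m+1)) = α^3*((α^4)^m*((1/32:ℝ)^m)) := by
        field_simp
        ring
      rw [h3]
      have h4 : (α^4)^m ≤ 1 := pow_le_one₀ (by positivity) (pow_le_one₀ hα.le (by linarith))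
      have h5 : ((1:ℝ)/32)^m ≤ (1/8:ℝ)^m := pow_le_pow_left₀ (by norm_num) (by norm_num) m
      calc α^3*((α^4)^m*((1/32:ℝ)^m)) ≤ α^3*(1*(1/8:ℝ)^m) := by
            apply mul_le_mul_of_nonneg_left _ (by positivity)
            exact mul_le_mul h4 h5 (by positivity) zero_le_one
        _ = α^3*(1/8:ℝ)^m := by ring
    have hsc : ((m:ℝ)+2)^2*((1/8:ℝ)^m) ≤ 4*((1/2:ℝ)^m) := by
      have h4 := sq_le_four_pow (m+1) (by omega)
      push_cast at h4
      have h5 : ((4:ℝ)^m)*((1/8:ℝ)^m) = (1/2:ℝ)^m := by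
        rw [← mul_pow]; norm_num
      have h6 : (4:ℝ)^(m+1) = 4*4^m := by ring
      calc ((m:ℝ)+2)^2*((1/8:ℝ)^m) ≤ (4*(4:ℝ)^m)*((1/8:ℝ)^m) := by
            apply mul_le_mul_of_nonneg_right _ (by positivity)
            nlinarith only [h4, h6]
        _ = 4*((1/2:ℝ)^m) := by rw [mul_assoc, h5]
    have he0 : (0:ℝ) ≤ (32/α) * Real.exp (-(((m+1:ℕ):ℝ)*g)) := by positivity
    have hinner1 : (t (m+1+1))^2 * ((32/α) * Real.exp (-(((m+1:ℕ):ℝ)*g)))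
        ≤ α^3*((1/2:ℝ)^m)*(8*R^2+8*gl) := by
      have h1 : (t (m+1+1))^2 * ((32/α) * Real.exp (-(((m+1:ℕ):ℝ)*g)))
          ≤ (8*R^2 + 2*((m:ℝ)+2)^2*gl) * (α^3 * (1/8:ℝ)^m) :=
        mul_le_mul htsA hexpj he0 (by positivity)
      have f1 : α^3*(8*R^2)*((1/8:ℝ)^m) ≤ α^3*(8*R^2)*((1/2:ℝ)^m) := by
        apply mul_le_mul_of_nonneg_left _ (by positivity)
        exact pow_le_pow_left₀ (by norm_num) (by norm_num) m
      have f2 : (2*gl*α^3)*(((m:ℝ)+2)^2*((1/8:ℝ)^m)) ≤ (2*gl*α^3)*(4*((1/2:ℝ)^m)) :=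
        mul_le_mul_of_nonneg_left hsc (by positivity)
      nlinarith only [h1, f1, f2]
    have hinner2 : (t (m+1+1))^2 * E ≤ B * E := mul_le_mul_of_nonneg_right htsB hE0
    calc (t (m+1+1))^2 * (Multiset.card (T.filter fun x => t (m+1) ≤ min |p x - a| |p x - b|) : ℝ)
        ≤ (t (m+1+1))^2 * (((32/α) * Real.exp (-(((m+1:ℕ):ℝ)*g)) + E) * n) :=
          mul_le_mul_of_nonneg_left hcj htj2
      _ = n*((t (m+1+1))^2 * ((32/α) * Real.exp (-(((m+1:ℕ):ℝ)*g)))) + n*((t (m+1+1))^2 * E) := by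
          ring
      _ ≤ n*(α^3*((1/2:ℝ)^(m+1-1))*(8*R^2+8*gl)) + n*(E*B) := by
          have g1 : (m+1-1 : ℕ) = m := by omega
          rw [g1]
          have g2 : (t (m+1+1))^2 * E ≤ E * B := by rw [mul_comm E B]; exact hinner2
          exact add_le_add (mul_le_mul_of_nonneg_left hinner1 hn.le)
            (mul_le_mul_of_nonneg_left g2 hn.le)
  have hgeo : ∑ j ∈ Finset.Ico 1 J, ((1/2:ℝ))^(j-1) ≤ 2 := by
    rw [Finset.sum_Ico_eq_sum_range]
    calc ∑ i ∈ Finset.range (J-1), ((1/2:ℝ))^(1+i-1)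
        = ∑ i ∈ Finset.range (J-1), ((1/2:ℝ))^i := by
          refine Finset.sum_congr rfl fun i _ => ?_
          congr 1
          omega
      _ ≤ 2 := gsum2 _
  have hJcard : ((Finset.Ico 1 J).card : ℝ) ≤ G := by
    rw [Nat.card_Ico]
    have h1 : ((J-1:ℕ):ℝ) = (J:ℝ) - 1 := by
      push_cast [hJ1]
      ring
    rw [h1]
    have h2 : G/g ≤ G := div_le_self hGpos hg1
    linarith only [hJle, h2]
  have hmidsum : ∑ j ∈ Finset.Ico 1 J, (t (j+1))^2
        * (Multiset.card (T.filter fun x => t j ≤ min |p x - a| |p x - b|) : ℝ)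
      ≤ n*(2*(R^2+gl)) + n*(G*(E*B)) := by
    calc ∑ j ∈ Finset.Ico 1 J, (t (j+1))^2
          * (Multiset.card (T.filter fun x => t j ≤ min |p x - a| |p x - b|) : ℝ)
        ≤ ∑ j ∈ Finset.Ico 1 J, (n*(α^3*((1/2:ℝ)^(j-1))*(8*R^2+8*gl)) + n*(E*B)) :=
          Finset.sum_le_sum hper
      _ = (n*α^3*(8*R^2+8*gl)) * (∑ j ∈ Finset.Ico 1 J, ((1/2:ℝ))^(j-1))
          + ((Finset.Ico 1 J).card : ℝ) * (n*(E*B)) := by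
          rw [Finset.sum_add_distrib]
          congr 1
          · rw [Finset.mul_sum]
            refine Finset.sum_congr rfl fun j _ => ?_
            ring
          · rw [Finset.sum_const, nsmul_eq_mul]
      _ ≤ (n*α^3*(8*R^2+8*gl)) * 2 + G * (n*(E*B)) := by
          have q1 : (0:ℝ) ≤ n*α^3*(8*R^2+8*gl) := by positivity
          have q2 : (0:ℝ) ≤ n*(E*B) := by positivity
          exact add_le_add (mul_le_mul_of_nonneg_left hgeo q1)
            (mul_le_mul_of_nonneg_right hJcard q2)
      _ ≤ n*(2*(R^2+gl)) + n*(G*(E*B)) := by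
          have q3 : (0:ℝ) ≤ 1/8 - α^3 := by linarith only [hα3]
          have q4 := mul_nonneg q3 (by positivity : (0:ℝ) ≤ n*(8*R^2+8*gl)*2)
          nlinarith only [q4]
  have hMcntJ : M^2 * (Multiset.card (T.filter fun x => t J ≤ min |p x - a| |p x - b|) : ℝ)
      ≤ n*(1 + E*M^2) := by
    have h1 : M^2 * (Multiset.card (T.filter fun x => t J ≤ min |p x - a| |p x - b|) : ℝ)
        ≤ M^2*((1/(1+M^2)+E)*n) := mul_le_mul_of_nonneg_left hcntJ (sq_nonneg M)
    have h2 : M^2*(1/(1+M^2)) ≤ 1 := by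
      rw [mul_one_div, div_le_one (by positivity)]
      linarith only []
    have h3 : n*(M^2*(1/(1+M^2))) ≤ n*1 := mul_le_mul_of_nonneg_left h2 hn.le
    calc M^2 * (Multiset.card (T.filter fun x => t J ≤ min |p x - a| |p x - b|) : ℝ)
        ≤ M^2*((1/(1+M^2)+E)*n) := h1
      _ = n*(M^2*(1/(1+M^2))) + n*(E*M^2) := by ring
      _ ≤ n*1 + n*(E*M^2) := by linarith only [h3]
      _ = n*(1 + E*M^2) := by ring
  have hvar := mvar_le_moment T p a
  rw [← hndef] at hvar
  have hvar2 : mVar T p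
      ≤ 2*W^2 + 2*(t 1)^2 + 4*(R^2+gl) + 2*(G*(E*B)) + 2 + 2*(E*M^2) := by
    have htotal : (T.map fun x => (p x - a)^2).sum
        ≤ n*(2*W^2 + 2*(t 1)^2 + 4*(R^2+gl) + 2*(G*(E*B)) + 2 + 2*(E*M^2)) := by
      nlinarith only [hmaster, hmidsum, hMcntJ]
    have h2 : (T.map fun x => (p x - a)^2).sum / n
        ≤ 2*W^2 + 2*(t 1)^2 + 4*(R^2+gl) + 2*(G*(E*B)) + 2 + 2*(E*M^2) := by
      rw [div_le_iff₀ hn]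
      nlinarith only [htotal]
    exact hvar.trans h2
  -- remaining: numeric bounds
  set PL := Lgl * LL^2 with hPLdef
  have hPL0 : (0:ℝ) ≤ PL := by positivity
  set lu := Real.log u with hludef
  have hlu0 : (0:ℝ) ≤ lu := Real.log_nonneg hu1
  have hlu2 : lu ≤ u^2 := by
    have h1 := Real.log_le_sub_one_of_pos hupos
    nlinarith only [h1, hu1]
  have hlu3 : lu^3 ≤ 27*u^2 := by
    have h1 := log_cube_le u hu1
    rw [← hludef] at h1
    nlinarith only [h1, hu1]
  have hW2 : W^2 ≤ C^4*PL := by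
    have h1 : W^2 ≤ (C*R*LL)^2 := pow_le_pow_left₀ hW0 hWle 2
    have h3 := mul_le_mul_of_nonneg_left hR2' (by positivity : (0:ℝ) ≤ C^2*LL^2)
    rw [hPLdef, hLgldef]
    nlinarith only [h1, h3]
  have hM2' : M^2 ≤ 2*D^2 + 2*W^2 := by
    rw [hMdef]
    nlinarith only [sq_nonneg (D-W)]
  have hD2 : D^2 ≤ 4*C^2*u^2 := by
    have hDsq : D^2 = (C*(1+u/(l:ℝ)))^l := rpow_half_sq _ (by positivity) l
    have h1 : C*(1+u/(l:ℝ)) ≤ 2*C*u := by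
      have h0 : u/(l:ℝ) ≤ u := div_le_self (by linarith) hlR
      nlinarith only [h0, hu1, hCpos]
    have h2 : (C*(1+u/(l:ℝ)))^l ≤ (2*C*u)^l := pow_le_pow_left₀ (by positivity) h1 l
    have h3 : (2*C*u)^l ≤ (2*C*u)^2 := by
      apply pow_le_pow_right₀ _ hl2
      nlinarith only [hC, hu1, hCpos]
    nlinarith only [hDsq, h2, h3]
  have hαLg3 : α^2*Lg^3 ≤ 14 := by
    have h1 := log_cube_le (1/α) (by linarith)
    rw [← hLgdef] at h1
    have h2 : α^2*Lg^3 ≤ α^2*(27*(1/α)) := mul_le_mul_of_nonneg_left h1 (by positivity)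
    have h3 : α^2*(27*(1/α)) = 27*α := by field_simp
    linarith only [h2, h3, hα2]
  have hLgl3 : Lgl ≤ 1 + Lg^3 := by
    rw [hLgldef]
    rcases hl with rfl|rfl
    · nlinarith only [hLgpos, mul_nonneg hLgpos.le (sq_nonneg (Lg-1)), sq_nonneg (Lg-1)]
    · nlinarith only [hLgpos, mul_nonneg hLgpos.le (sq_nonneg (Lg-1)), sq_nonneg (Lg-1)]
  have hLgl1 : Lg*Lgl ≤ 1 + Lg^3 := by
    rw [hLgldef]
    rcases hl with rfl|rfl
    · nlinarith only [hLgpos, mul_nonneg hLgpos.le (sq_nonneg (Lg-1)), sq_nonneg (Lg-1)]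
    · nlinarith only [hLgpos]
  have hLgl15 : α^2*Lgl ≤ 15 := by
    have h1 : α^2*Lgl ≤ α^2*(1+Lg^3) := mul_le_mul_of_nonneg_left hLgl3 (by positivity)
    nlinarith only [h1, hαLg3, hα4]
  have hLgl115 : α^2*(Lg*Lgl) ≤ 15 := by
    have h1 : α^2*(Lg*Lgl) ≤ α^2*(1+Lg^3) := mul_le_mul_of_nonneg_left hLgl1 (by positivity)
    nlinarith only [h1, hαLg3, hα4]
  have hELgl : E*Lgl ≤ 30 := by
    rw [hEdef, div_mul_eq_mul_div, div_le_iff₀ (by positivity)]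
    nlinarith only [hLgl15, hu2]
  have hELgLgl : E*(Lg*Lgl) ≤ 30 := by
    rw [hEdef, div_mul_eq_mul_div, div_le_iff₀ (by positivity)]
    nlinarith only [hLgl115, hu2]
  have hEluLgl : E*(lu*Lgl) ≤ 30 := by
    rw [hEdef, div_mul_eq_mul_div, div_le_iff₀ (by positivity)]
    have h1 : α^2*Lgl*lu ≤ 15*u^2 :=
      mul_le_mul hLgl15 hlu2 hlu0 (by norm_num)
    nlinarith only [h1]
  have hELg3 : E*Lg^3 ≤ 28 := by
    rw [hEdef, div_mul_eq_mul_div, div_le_iff₀ (by positivity)]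
    nlinarith only [hαLg3, hu2]
  have hElu3 : E*lu^3 ≤ 54 := by
    rw [hEdef, div_mul_eq_mul_div, div_le_iff₀ (by positivity)]
    have h1 := mul_nonneg (by linarith only [hα4] : (0:ℝ) ≤ 1/4 - α^2) (by positivity : (0:ℝ) ≤ lu^3)
    nlinarith only [h1, hlu3]
  set c4 := 39 + 2*C + 2*C^4 with hc4def
  have hc40 : (0:ℝ) ≤ c4 := by positivity
  -- G ≤ c4 + 5 Lg + 2 lu
  have hG4 : G ≤ c4 + 5*Lg + 2*lu := by
    have e1 : G = Real.log 32 + Real.log (1+M^2) + Lg := by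
      rw [hGdef, Real.log_div (by positivity) (ne_of_gt hα),
        Real.log_mul (by norm_num) (by positivity), hLgdef, one_div, Real.log_inv]
      ring
    have q1 : (1:ℝ)+M^2 ≤ (1+8*C^2*u^2)*(1+2*W^2) := by
      nlinarith only [hM2', hD2,
        mul_nonneg (mul_nonneg (sq_nonneg C) (sq_nonneg u)) (sq_nonneg W),
        sq_nonneg W, sq_nonneg (C*u)]
    have q2 : Real.log (1+M^2) ≤ Real.log (1+8*C^2*u^2) + Real.log (1+2*W^2) := by
      calc Real.log (1+M^2) ≤ Real.log ((1+8*C^2*u^2)*(1+2*W^2)) :=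
            Real.log_le_log (by positivity) q1
        _ = Real.log (1+8*C^2*u^2) + Real.log (1+2*W^2) :=
            Real.log_mul (by positivity) (by positivity)
    have q3 : Real.log (1+8*C^2*u^2) ≤ 8 + 2*C + 2*lu := by
      have r0 : (1:ℝ) ≤ C^2*u^2 := by
        have hC2 : (1:ℝ) ≤ C^2 := one_le_pow₀ hC
        nlinarith only [hC2, hu2]
      have r1 : (1:ℝ)+8*C^2*u^2 ≤ 9*C^2*u^2 := by nlinarith only [r0]
      have r2 : Real.log (1+8*C^2*u^2) ≤ Real.log (9*C^2*u^2) :=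
        Real.log_le_log (by positivity) r1
      have r3 : Real.log (9*C^2*u^2) = Real.log 9 + 2*Real.log C + 2*lu := by
        rw [Real.log_mul (by positivity) (by positivity),
          Real.log_mul (by norm_num) (by positivity), Real.log_pow, Real.log_pow, hludef]
        push_cast; ring
      have r4 : Real.log 9 ≤ 8 := by
        have := Real.log_le_sub_one_of_pos (by norm_num : (0:ℝ) < 9); linarith
      have r5 : Real.log C ≤ C := by
        have := Real.log_le_sub_one_of_pos hCpos; linarith
      linarith only [r2, r3, r4, r5]
    have q4 : Real.log (1+2*W^2) ≤ 2*C^4 + 4*Lg := by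
      have r1 : Lgl ≤ (1+Lg)^2 := by
        rw [hLgldef]
        rcases hl with rfl|rfl
        · nlinarith only [hLgpos]
        · nlinarith only [hLgpos]
      have r2 : LL ≤ 1+Lg := by
        have := Real.log_le_sub_one_of_pos (by positivity : (0:ℝ) < 2+Lg)
        rw [← hLLdef] at this; linarith
      have r3 : LL^2 ≤ (1+Lg)^2 := pow_le_pow_left₀ hLLpos.le r2 2
      have r4 : PL ≤ (1+Lg)^4 := by
        rw [hPLdef]
        calc Lgl*LL^2 ≤ (1+Lg)^2*(1+Lg)^2 :=
              mul_le_mul r1 r3 (by positivity) (by positivity)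
          _ = (1+Lg)^4 := by ring
      have r5 : W^2 ≤ C^4*(1+Lg)^4 := by
        have := mul_le_mul_of_nonneg_left r4 (by positivity : (0:ℝ) ≤ C^4)
        linarith only [hW2, this]
      have r6 : (1:ℝ) ≤ (1+Lg)^4 := one_le_pow₀ (by linarith)
      have r7 : (1:ℝ)+2*W^2 ≤ (1+2*C^4)*(1+Lg)^4 := by nlinarith only [r5, r6, hCpos]
      have r8 : Real.log ((1+2*C^4)*(1+Lg)^4) = Real.log (1+2*C^4) + 4*Real.log (1+Lg) := by
        rw [Real.log_mul (by positivity) (by positivity), Real.log_pow]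
        push_cast; ring
      have r9 : Real.log (1+2*C^4) ≤ 2*C^4 := by
        have := Real.log_le_sub_one_of_pos (by positivity : (0:ℝ) < 1+2*C^4); linarith
      have r10 : Real.log (1+Lg) ≤ Lg := by
        have := Real.log_le_sub_one_of_pos (by positivity : (0:ℝ) < 1+Lg); linarith
      calc Real.log (1+2*W^2) ≤ Real.log ((1+2*C^4)*(1+Lg)^4) :=
            Real.log_le_log (by positivity) r7
        _ = Real.log (1+2*C^4) + 4*Real.log (1+Lg) := r8
        _ ≤ 2*C^4 + 4*Lg := by linarith only [r9, r10]
    have q5 : Real.log 32 ≤ 31 := by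
      have := Real.log_le_sub_one_of_pos (by norm_num : (0:ℝ) < 32); linarith
    rw [hc4def]
    linarith only [e1, q2, q3, q4, q5]
  set H := c4 + 14*Lg + 2*lu with hHdef
  have hH0 : (0:ℝ) ≤ H := by positivity
  have hGH : G ≤ H := by rw [hHdef]; linarith only [hG4, hLgpos, hlu0]
  have hGgH : G + g ≤ H := by rw [hHdef]; linarith only [hG4, hg9]
  have hBH : B ≤ 8*C^2*Lgl + 2*H^2 := by
    rw [hBdef]
    have h1 : (G+g)^2 ≤ H^2 := pow_le_pow_left₀ (by linarith) hGgH 2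
    linarith only [h1]
  have hEHL : E*(H*Lgl) ≤ 30*c4 + 480 := by
    have e1 : E*(H*Lgl) = c4*(E*Lgl) + 14*(E*(Lg*Lgl)) + 2*(E*(lu*Lgl)) := by
      rw [hHdef]; ring
    have s1 : c4*(E*Lgl) ≤ c4*30 := by
      apply mul_le_mul_of_nonneg_left hELgl hc40
    linarith only [e1, s1, hELgLgl, hEluLgl]
  have hEH3 : E*H^3 ≤ 54*c4^3 + 2100000 := by
    have q1 : H^3 ≤ 27*(c4^3 + (14*Lg)^3 + (2*lu)^3) := by
      rw [hHdef]
      exact cube_sum_le c4 (14*Lg) (2*lu) hc40 (by linarith) (by linarith)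
    have q2 : E*H^3 ≤ E*(27*(c4^3 + (14*Lg)^3 + (2*lu)^3)) :=
      mul_le_mul_of_nonneg_left q1 hE0
    have s1 : E*c4^3 ≤ 2*c4^3 := by
      have h2 : E ≤ 2 := by linarith only [hE12]
      nlinarith only [h2, hc40, pow_nonneg hc40 3]
    nlinarith only [q2, s1, hELg3, hElu3]
  have hGEB : G*(E*B) ≤ 8*C^2*(30*c4+480) + 2*(54*c4^3+2100000) := by
    have q1 : E*B ≤ E*(8*C^2*Lgl + 2*H^2) := mul_le_mul_of_nonneg_left hBH hE0
    have q2 : G*(E*B) ≤ H*(E*(8*C^2*Lgl+2*H^2)) :=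
      mul_le_mul hGH q1 (by positivity) hH0
    have q3 : H*(E*(8*C^2*Lgl+2*H^2)) = 8*C^2*(E*(H*Lgl)) + 2*(E*H^3) := by ring
    have q4 : 8*C^2*(E*(H*Lgl)) ≤ 8*C^2*(30*c4+480) :=
      mul_le_mul_of_nonneg_left hEHL (by positivity)
    have q5 : 2*(E*H^3) ≤ 2*(54*c4^3+2100000) := by linarith only [hEH3]
    linarith only [q2, q3, q4, q5]
  have hEM2 : E*M^2 ≤ 4*C^2 + W^2 := by
    clear_value E M D W u
    have q1 : E*M^2 ≤ E*(2*D^2+2*W^2) := mul_le_mul_of_nonneg_left hM2' hE0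
    have r1 : E*D^2 ≤ E*(4*C^2*u^2) := mul_le_mul_of_nonneg_left hD2 hE0
    have r2 : E*(4*C^2*u^2) = 8*C^2*α^2 := by
      rw [hEdef]; field_simp; ring
    have r3 : 8*C^2*α^2 ≤ 2*C^2 := by nlinarith only [hα4, sq_nonneg C]
    have q3 : E*W^2 ≤ (1/2)*W^2 := mul_le_mul_of_nonneg_right hE12 (sq_nonneg W)
    nlinarith only [q1, r1, r2, r3, q3, sq_nonneg W]
  -- final assembly
  set CP := C^12 with hCPdef
  have hC12 : C^2 ≤ CP := by rw [hCPdef]; exact pow_le_pow_right₀ hC (by norm_num)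
  have hC4' : C^4 ≤ CP := by rw [hCPdef]; exact pow_le_pow_right₀ hC (by norm_num)
  have hC6' : C^6 ≤ CP := by rw [hCPdef]; exact pow_le_pow_right₀ hC (by norm_num)
  have hCP1 : (1:ℝ) ≤ CP := by rw [hCPdef]; exact one_le_pow₀ hC
  have hCP0 : (0:ℝ) ≤ CP := by linarith
  have hc4C : c4 ≤ 43*C^4 := by
    rw [hc4def]
    have h1 : C ≤ C^4 := le_self_pow₀ (by linarith) (by norm_num)
    have h2 : (1:ℝ) ≤ C^4 := one_le_pow₀ hC
    linarith only [h1, h2]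
  have hc43 : c4^3 ≤ 79507*CP := by
    have h1 : c4^3 ≤ (43*C^4)^3 := pow_le_pow_left₀ hc40 hc4C 3
    have h2 : (43*C^4)^3 = 79507*CP := by rw [hCPdef]; ring
    linarith only [h1, h2]
  have hLgl48 : (12:ℝ)/25 ≤ Lgl := by
    rw [hLgldef]
    rcases hl with rfl|rfl
    · nlinarith only [hLg2, hlog2]
    · nlinarith only [hLg2, hlog2]
  have hLL48 : (12:ℝ)/25 ≤ LL^2 := by nlinarith only [hLL2, hlog2]
  have hone : (1:ℝ) ≤ 5*PL := by
    rw [hPLdef]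
    nlinarith only [hLgl48, hLL48]
  have hLgl3Λ : Lgl ≤ 3*PL := by
    rw [hPLdef]
    nlinarith only [hLL48, hLgl0]
  have hPLCP : PL ≤ CP*PL := by nlinarith only [hCP1, hPL0]
  have hCP5 : CP ≤ 5*(CP*PL) := by nlinarith only [hone, hCP0]
  -- translate every term into CP*PL units
  have v1 : W^2 ≤ CP*PL := by
    have h1 : C^4*PL ≤ CP*PL := mul_le_mul_of_nonneg_right hC4' hPL0
    linarith only [hW2, h1]
  have v2 : R^2 ≤ 3*(CP*PL) := by
    have m1 : C^2*Lgl ≤ C^2*(3*PL) := mul_le_mul_of_nonneg_left hLgl3Λ (sq_nonneg C)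
    have m2 : C^2*PL ≤ CP*PL := mul_le_mul_of_nonneg_right hC12 hPL0
    nlinarith only [hR2', m1, m2]
  have v3 : gl ≤ 243*(CP*PL) := by
    nlinarith only [hgl', hLgl3Λ, hPLCP]
  have v4 : G*(E*B) ≤ 64004580*(CP*PL) := by
    have m1 : C^2*c4 ≤ 43*C^6 := by
      have := mul_le_mul_of_nonneg_left hc4C (sq_nonneg C)
      nlinarith only [this]
    have step1 : G*(E*B) ≤ 12800916*CP := by
      nlinarith only [hGEB, m1, hc43, hC12, hC6', hCP1]
    nlinarith only [step1, hCP5]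
  have v5 : E*M^2 ≤ 21*(CP*PL) := by
    nlinarith only [hEM2, v1, hC12, hCP5]
  have v6 : (2:ℝ) ≤ 10*(CP*PL) := by nlinarith only [hone, hPLCP]
  calc mVar T p ≤ 128011218*(CP*PL) := by
        linarith only [hvar2, ht1sq, v1, v2, v3, v4, v5, v6]
    _ ≤ 10^9*(CP*PL) := by nlinarith only [hCP0, hPL0, mul_nonneg hCP0 hPL0]
    _ = 10^9 * CP * Lgl * LL^2 := by rw [hPLdef]; ring
end
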